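/- arXiv:2501.14125 — 8 statements merged into one kernel-verified Lean document; each statement's English description precedes it below -/
import Mathlib

section
/- The number of 2×m matrices A=[a_ij] with entries in [0,n-1] satisfying: (i) the first row is strictly increasing, (ii) the second row is weakly increasing, (iii) repeated entries in the second row are all 0, and (iv) a_{1j} ≥ a_{2j} for each column j, together with the single degenerate matrix, equals the central binomial coefficient C(2n,n). -/
open Finset

/-- `l` encodes a (non-degenerate) indexing matrix on `n` points: the columns,
listed left to right, as pairs `(top entry, bottom entry)`.  Entries lie in
`[0, n-1]`, the first row is strictly increasing, the second row is weakly
increasing, repeated second-row entries are `0`, and each top entry is at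
least the corresponding bottom entry. -/
def IsIndexingMatrix (n : ℕ) (l : List (ℕ × ℕ)) : Prop :=
  1 ≤ l.length ∧ l.length ≤ n ∧
  (∀ p ∈ l, p.1 < n ∧ p.2 ≤ p.1) ∧
  l.Pairwise (fun p q => p.1 < q.1 ∧ p.2 ≤ q.2 ∧ (p.2 = q.2 → p.2 = 0))

/-- A positive indexing matrix: all entries are positive. -/
def IsPositiveIndexingMatrix (n : ℕ) (l : List (ℕ × ℕ)) : Prop :=
  IsIndexingMatrix n l ∧ ∀ p ∈ l, 0 < p.1 ∧ 0 < p.2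

/-- `θ_k^{(n)}`: the number of positive indexing matrices whose `(1,1)` entry
equals `k`. -/
noncomputable def theta (n k : ℕ) : ℕ :=
  Nat.card {l : List (ℕ × ℕ) //
    IsPositiveIndexingMatrix n l ∧ l.head?.map Prod.fst = some k}

/-- The blob-rank of an indexing matrix: the number of its columns containing
a `0`. -/
def blobRank (l : List (ℕ × ℕ)) : ℕ := l.countP (fun p => p.1 == 0 || p.2 == 0)

/-- `Ω_r^{(n)}`: the number of indexing matrices on `n` points of blob-rank `r`,
the degenerate indexing matrix being counted in `Ω_0^{(n)}`. -/
noncomputable def Omega (n r : ℕ) : ℕ :=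
  Nat.card {l : List (ℕ × ℕ) // IsIndexingMatrix n l ∧ blobRank l = r} +
    (if r = 0 then 1 else 0)

/-- `χ_k^{(n)} = Σ_{i₁+⋯+i_k = n-k} C_{i₁} ⋯ C_{i_k}` (Catalan numbers). -/
def chi (n k : ℕ) : ℕ :=
  ∑ t ∈ Finset.Nat.antidiagonalTuple k (n - k), ∏ j, catalan (t j)

/-- A Temperley–Lieb diagram on `n` points: a non-crossing perfect matching of
`2n` boundary points numbered clockwise, given by a fixed-point free
involution. -/
structure TLDiagram (n : ℕ) where
  f : Fin (2 * n) → Fin (2 * n)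
  involutive : ∀ x, f (f x) = x
  noFixedPoint : ∀ x, f x ≠ x
  noncrossing : ∀ a b : Fin (2 * n), a < b → b < f a → f a < f b → False

/-- `a` is the left (smaller) endpoint of an arc of `D`. -/
def TLDiagram.IsArc {n : ℕ} (D : TLDiagram n) (a : Fin (2 * n)) : Prop :=
  a < D.f a

/-- The arc with left endpoint `a` is exposed to the left side of the diagram,
i.e. it is not nested inside any other arc. -/
def TLDiagram.IsExposed {n : ℕ} (D : TLDiagram n) (a : Fin (2 * n)) : Prop :=
  a < D.f a ∧ ∀ c, ¬ (c < a ∧ D.f a < D.f c)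

/-- The number of arcs of `D` exposed to the left side. -/
noncomputable def exposedCount {n : ℕ} (D : TLDiagram n) : ℕ :=
  Nat.card {a : Fin (2 * n) // D.IsExposed a}

/-- A `d`-abacus blob diagram on `n` points: a TL-diagram together with blobs
on some arcs exposed to the left, one bead count in `ℤ/dℤ` on every arc, and
an extra bead count on every blobbed arc (its second component). -/
structure AbacusBlobDiagram (d n : ℕ) where
  base : TLDiagram n
  blob : Fin (2 * n) → Bool
  blob_exposed : ∀ a, blob a = true → base.IsExposed a
  beads₁ : Fin (2 * n) → ZMod d
  beads₂ : Fin (2 * n) → ZMod d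
  beads₁_arc : ∀ a, ¬ base.IsArc a → beads₁ a = 0
  beads₂_blob : ∀ a, blob a = false → beads₂ a = 0

/-- A `d`-abacus hook diagram on `n` points: a blobbed TL-diagram in which all
blobbed arcs are merged into the single hook component through `0, 0'`, with a
bead count in `ℤ/dℤ` on every unblobbed arc and one on the hook component. -/
structure AbacusHookDiagram (d n : ℕ) where
  base : TLDiagram n
  blob : Fin (2 * n) → Bool
  blob_exposed : ∀ a, blob a = true → base.IsExposed a
  beads : Fin (2 * n) → ZMod d
  beads_arc : ∀ a, ¬ base.IsArc a ∨ blob a = true → beads a = 0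
  hookBeads : ZMod d


/-!
Read an indexing matrix from right to left: its top row is a decreasing list `as ⊆ [0, n)`, and
the positive entries of its bottom row form a decreasing list `cs ⊆ [1, n - 1]`, zeros filling
the remaining columns; the matrix conditions say exactly that `cs`, aligned with the start of `as`, is
entrywise at most `as`. Allow the first `s` entries of `cs` to be unmatched ("slack `s`") and
build such pairs by deciding, for the largest value `n`, whether `n` joins `as` and whether
`n + 1` joins `cs`. This gives the recursion `N(n+1, 0) = N(n, 0) + N(n, 1)` and
`N(n+1, s+1) = N(n, s) + 2 N(n, s+1) + N(n, s+2)` with `N(0, s) = 1`, which is solved by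
`N(n, s) = Σ_{|i - n| ≤ s} C(2n, i)`. At slack `0` this is `C(2n, n)`, the pair of empty lists
playing the role of the degenerate matrix.
-/

namespace Nat

theorem sum_range_succ_choose (m j : ℕ) :
    ∑ i ∈ range j, (m + 1).choose i =
      ∑ i ∈ range j, m.choose i + ∑ i ∈ range (j - 1), m.choose i := by
  cases j with
  | zero => simp
  | succ j =>
    simp only [sum_range_succ' (fun i => (m + 1).choose i), choose_succ_succ, sum_add_distrib,
      Nat.add_sub_cancel, sum_range_succ' (fun i => m.choose i), choose_zero_right]
    ring

theorem sum_range_add_two_choose (m j : ℕ) :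
    ∑ i ∈ range j, (m + 2).choose i =
      ∑ i ∈ range j, m.choose i + 2 * ∑ i ∈ range (j - 1), m.choose i +
        ∑ i ∈ range (j - 2), m.choose i := by
  rw [sum_range_succ_choose, sum_range_succ_choose, sum_range_succ_choose, Nat.sub_sub]
  ring

theorem two_mul_sum_range_choose_add_choose (k : ℕ) :
    2 * ∑ i ∈ range k, (2 * k).choose i + (2 * k).choose k = 4 ^ k := by
  rw [← sum_range_choose_halfway, sum_range_succ_choose, Nat.add_sub_cancel, sum_range_succ]
  ring

theorem two_mul_sum_range_choose_le {k j : ℕ} (hj : j ≤ k) :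
    2 * ∑ i ∈ range j, (2 * k).choose i ≤ 4 ^ k := by
  have := sum_le_sum_of_subset (f := fun i => (2 * k).choose i) (range_subset_range.2 hj)
  have := two_mul_sum_range_choose_add_choose k
  omega

end Nat

/-- `Σ_{|i - k| ≤ s} C(2k, i)`, written through the symmetry `C(2k, i) = C(2k, 2k - i)`. -/
def centralWindow (k s : ℕ) : ℕ := 4 ^ k - 2 * ∑ i ∈ range (k - s), (2 * k).choose i

theorem centralWindow_zero_right (k : ℕ) : centralWindow k 0 = (2 * k).choose k := by
  have := Nat.two_mul_sum_range_choose_add_choose k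
  simp only [centralWindow, Nat.sub_zero]
  omega

theorem centralWindow_zero_left (s : ℕ) : centralWindow 0 s = 1 := by
  simp [centralWindow]

theorem centralWindow_succ_zero (k : ℕ) :
    centralWindow (k + 1) 0 = centralWindow k 0 + centralWindow k 1 := by
  have hstep := Nat.sum_range_add_two_choose (2 * k) (k + 1)
  have hsym := Nat.two_mul_sum_range_choose_add_choose k
  have hle := Nat.two_mul_sum_range_choose_le (k := k) (j := k - 1) (by omega)
  have hsucc := sum_range_succ (fun i => (2 * k).choose i) k
  rw [Nat.add_sub_cancel, show k + 1 - 2 = k - 1 by omega] at hstep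
  simp only [centralWindow, Nat.sub_zero]
  rw [show 2 * (k + 1) = 2 * k + 2 by ring, pow_succ, hstep]
  omega

theorem centralWindow_succ_succ (k s : ℕ) :
    centralWindow (k + 1) (s + 1) =
      centralWindow k s + 2 * centralWindow k (s + 1) + centralWindow k (s + 2) := by
  have hstep := Nat.sum_range_add_two_choose (2 * k) (k - s)
  have h₀ := Nat.two_mul_sum_range_choose_le (k := k) (j := k - s) (by omega)
  have h₁ := Nat.two_mul_sum_range_choose_le (k := k) (j := k - s - 1) (by omega)
  have h₂ := Nat.two_mul_sum_range_choose_le (k := k) (j := k - s - 2) (by omega)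
  unfold centralWindow
  rw [show 2 * (k + 1) = 2 * k + 2 by ring, pow_succ, Nat.add_sub_add_right, hstep,
    show k - (s + 1) = k - s - 1 by omega, show k - (s + 2) = k - s - 2 by omega]
  omega

namespace List

theorem sublist_cons_iff_exists_cond {α : Type*} {a : α} {l L : List α} :
    l.Sublist (a :: L) ↔ ∃ x : Bool, ∃ r, r.Sublist L ∧ cond x (a :: r) r = l := by
  rw [sublist_cons_iff]
  constructor
  · rintro (h | ⟨r, rfl, h⟩)
    exacts [⟨false, l, h, rfl⟩, ⟨true, r, h, rfl⟩]
  · rintro ⟨_ | _, r, h, rfl⟩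
    exacts [Or.inl h, Or.inr ⟨r, rfl, h⟩]

theorem sublist_iff_pairwise_gt_subset {l L : List ℕ} (hL : L.Pairwise (· > ·)) :
    l.Sublist L ↔ l.Pairwise (· > ·) ∧ l ⊆ L :=
  ⟨fun h => ⟨hL.sublist h, h.subset⟩, fun ⟨hl, hsub⟩ =>
    sublist_of_subperm_of_pairwise (subperm_of_subset hl.nodup hsub) hl hL⟩

theorem sublist_reverse_range_iff {n : ℕ} {l : List ℕ} :
    l.Sublist (range n).reverse ↔ l.Pairwise (· > ·) ∧ ∀ a ∈ l, a < n := by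
  rw [sublist_iff_pairwise_gt_subset (by simpa [pairwise_reverse] using pairwise_lt_range)]
  simp [subset_def]

theorem sublist_reverse_range'_iff {n : ℕ} {l : List ℕ} :
    l.Sublist (range' 1 n).reverse ↔ l.Pairwise (· > ·) ∧ ∀ c ∈ l, 0 < c ∧ c ≤ n := by
  rw [sublist_iff_pairwise_gt_subset
    (by simpa [pairwise_reverse] using pairwise_lt_range' (s := 1) (n := n))]
  simp [subset_def, Nat.lt_one_add_iff, Nat.one_le_iff_ne_zero, Nat.pos_iff_ne_zero]

theorem reverse_range_succ (n : ℕ) : (range (n + 1)).reverse = n :: (range n).reverse := by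
  simp [range_succ]

theorem reverse_range'_one_succ (n : ℕ) :
    (range' 1 (n + 1)).reverse = (n + 1) :: (range' 1 n).reverse := by
  simp [range'_1_concat, Nat.add_comm]

theorem eq_filter_pos_append_replicate {bs : List ℕ} (h : bs.Pairwise (· ≥ ·)) :
    bs = bs.filter (0 < ·) ++ replicate (bs.length - (bs.filter (0 < ·)).length) 0 := by
  induction bs with
  | nil => simp
  | cons b bs ih =>
    rw [pairwise_cons] at h
    rcases Nat.eq_zero_or_pos b with rfl | hb
    · obtain ⟨k, rfl⟩ : ∃ k, bs = replicate k 0 :=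
        ⟨_, eq_replicate_iff.2 ⟨rfl, fun x hx => Nat.le_zero.1 (h.1 x hx)⟩⟩
      simp [replicate_succ]
    · simpa [hb, Nat.add_sub_add_right] using ih h.2

end List

namespace IndexingMatrix

/-- `Dominated s cs as`: once the first `s` entries of `cs` are dropped, every entry of `cs` is at
most the entry of `as` in the same position. -/
def Dominated : ℕ → List ℕ → List ℕ → Prop
  | _, [], _ => True
  | 0, _ :: _, [] => False
  | 0, c :: cs, a :: as => c ≤ a ∧ Dominated 0 cs as
  | s + 1, _ :: cs, as => Dominated s cs as

namespace Dominated

@[simp] theorem nil_left (s : ℕ) (as : List ℕ) : Dominated s [] as := by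
  cases s <;> trivial

theorem cons_right {a : ℕ} {cs : List ℕ} (h : ∀ c ∈ cs, c ≤ a) (s : ℕ) (as : List ℕ) :
    Dominated s cs (a :: as) ↔ Dominated (s + 1) cs as := by
  induction cs generalizing s with
  | nil => simp
  | cons c cs ih =>
    cases s with
    | zero => simp only [Dominated, h c List.mem_cons_self, true_and]
    | succ s => exact ih (fun x hx => h x (List.mem_cons_of_mem c hx)) s

theorem not_zero_cons {c : ℕ} {as : List ℕ} (h : ∀ a ∈ as, a < c) (cs : List ℕ) :
    ¬ Dominated 0 (c :: cs) as := by
  cases as with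
  | nil => exact id
  | cons a as => exact fun hd => absurd hd.1 (Nat.not_le.2 (h a List.mem_cons_self))

theorem cond_cons_iff {n s : ℕ} {as cs : List ℕ} (has : ∀ a ∈ as, a < n)
    (hcs : ∀ c ∈ cs, c ≤ n) (x y : Bool) :
    Dominated s (cond y ((n + 1) :: cs) cs) (cond x (n :: as) as) ↔
      (y → 0 < s) ∧ Dominated (s + x.toNat - y.toNat) cs as := by
  have has' : ∀ a ∈ n :: as, a < n + 1 := by
    simpa [Nat.lt_succ_iff] using fun a ha => (has a ha).le
  cases x <;> cases y <;> cases s <;>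
    simp [Dominated, cons_right hcs, not_zero_cons has', not_zero_cons (c := n + 1)
      (fun a ha => (has a ha).trans n.lt_succ_self)]

theorem zero_iff_forall₂ (cs as : List ℕ) :
    Dominated 0 cs as ↔
      List.Forall₂ (· ≤ ·) (cs ++ List.replicate (as.length - cs.length) 0) as := by
  induction cs generalizing as with
  | nil => simp [List.forall₂_iff_get]
  | cons c cs ih =>
    cases as with
    | nil => simp [Dominated]
    | cons a as => simp [Dominated, ih]

end Dominated

/-- The sublists of `[n-1, …, 0]` and of `[n, …, 1]` are the decreasing lists with entries in
`[0, n)` and in `[1, n]`. -/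
def IsConfig (n s : ℕ) (p : List ℕ × List ℕ) : Prop :=
  p.1.Sublist (List.range n).reverse ∧ p.2.Sublist (List.range' 1 n).reverse ∧
    Dominated s p.2 p.1

def push (n : ℕ) (t : Bool × Bool) (q : List ℕ × List ℕ) : List ℕ × List ℕ :=
  (cond t.1 (n :: q.1) q.1, cond t.2 ((n + 1) :: q.2) q.2)

theorem isConfig_zero_iff {s : ℕ} {p : List ℕ × List ℕ} :
    IsConfig 0 s p ↔ p = ([], []) := by
  obtain ⟨as, cs⟩ := p
  simp +contextual [IsConfig]

theorem isConfig_succ_iff {n s : ℕ} {p : List ℕ × List ℕ} :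
    IsConfig (n + 1) s p ↔ ∃ t : Bool × Bool, (t.2 → 0 < s) ∧
      ∃ q, IsConfig n (s + t.1.toNat - t.2.toNat) q ∧ push n t q = p := by
  obtain ⟨as, cs⟩ := p
  simp only [IsConfig, List.reverse_range_succ, List.reverse_range'_one_succ,
    List.sublist_cons_iff_exists_cond]
  have dominated_iff {as' cs' : List ℕ} (has' : as'.Sublist (List.range n).reverse)
      (hcs' : cs'.Sublist (List.range' 1 n).reverse) :=
    Dominated.cond_cons_iff (s := s) (List.sublist_reverse_range_iff.1 has').2
      (fun c hc => ((List.sublist_reverse_range'_iff.1 hcs').2 c hc).2)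
  constructor
  · rintro ⟨⟨x, as', has', rfl⟩, ⟨y, cs', hcs', rfl⟩, hdom⟩
    obtain ⟨hy, hdom⟩ := (dominated_iff has' hcs' x y).1 hdom
    exact ⟨(x, y), hy, (as', cs'), ⟨has', hcs', hdom⟩, rfl⟩
  · rintro ⟨⟨x, y⟩, hy, ⟨as', cs'⟩, ⟨has', hcs', hdom⟩, heq⟩
    obtain ⟨rfl, rfl⟩ := Prod.mk.inj heq
    exact ⟨⟨x, as', has', rfl⟩, ⟨y, cs', hcs', rfl⟩,
      (dominated_iff has' hcs' x y).2 ⟨hy, hdom⟩⟩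

def configs : ℕ → ℕ → Finset (List ℕ × List ℕ)
  | 0, _ => {([], [])}
  | n + 1, s => (univ.filter fun t : Bool × Bool => t.2 → 0 < s).biUnion fun t =>
      (configs n (s + t.1.toNat - t.2.toNat)).image (push n t)

theorem mem_configs {n s : ℕ} {p : List ℕ × List ℕ} :
    p ∈ configs n s ↔ IsConfig n s p := by
  induction n generalizing s p with
  | zero => simp [configs, isConfig_zero_iff]
  | succ n ih => simp [configs, ih, isConfig_succ_iff]

theorem push_injective (n : ℕ) (t : Bool × Bool) : Function.Injective (push n t) := by
  rintro ⟨_, _⟩ ⟨_, _⟩ h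
  obtain ⟨_ | _, _ | _⟩ := t <;> simpa [push] using h

theorem decide_mem_push {n s : ℕ} {q : List ℕ × List ℕ} (hq : IsConfig n s q) (t : Bool × Bool) :
    (decide (n ∈ (push n t q).1), decide (n + 1 ∈ (push n t q).2)) = t := by
  have ha : n ∉ q.1 := fun h => (Nat.lt_irrefl n) ((List.sublist_reverse_range_iff.1 hq.1).2 n h)
  have hc : n + 1 ∉ q.2 := fun h =>
    Nat.not_succ_le_self n ((List.sublist_reverse_range'_iff.1 hq.2.1).2 _ h).2
  obtain ⟨_ | _, _ | _⟩ := t <;> simp [push, ha, hc]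

theorem card_configs (n s : ℕ) : (configs n s).card = centralWindow n s := by
  induction n generalizing s with
  | zero => simp [configs, centralWindow_zero_left]
  | succ n ih =>
    rw [configs, card_biUnion]
    · simp only [card_image_of_injective _ (push_injective n _), ih]
      cases s
      · simp [sum_filter, Fintype.sum_prod_type, centralWindow_succ_zero, add_comm]
      · simp [Fintype.sum_prod_type, centralWindow_succ_succ, two_mul, add_assoc, add_left_comm,
          add_comm]
    · intro t _ t' _ htt'
      simp only [Function.onFun, disjoint_left, mem_image, not_exists, not_and]
      rintro _ ⟨q, hq, rfl⟩ q' hq' heq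
      exact htt' (by
        rw [← decide_mem_push (mem_configs.1 hq) t, ← decide_mem_push (mem_configs.1 hq') t', heq])

theorem mem_erase_configs_zero {n : ℕ} {p : List ℕ × List ℕ} :
    p ∈ (configs n 0).erase ([], []) ↔ IsConfig n 0 p ∧ p.1 ≠ [] := by
  obtain ⟨as, cs⟩ := p
  rw [mem_erase, mem_configs]
  rcases as with _ | ⟨a, as⟩
  · cases cs <;> simp [IsConfig, Dominated]
  · simp

theorem isIndexingMatrix_iff {n : ℕ} {l : List (ℕ × ℕ)} :
    IsIndexingMatrix n l ↔
      l ≠ [] ∧ (l.reverse.map Prod.fst).Sublist (List.range n).reverse ∧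
      (l.reverse.map Prod.snd).Pairwise (fun b b' => b' ≤ b ∧ (b' = b → b' = 0)) ∧
      ∀ p ∈ l, p.2 ≤ p.1 := by
  rw [List.sublist_reverse_range_iff, List.pairwise_map, List.pairwise_map]
  constructor
  · rintro ⟨hpos, -, hmem, hpw⟩
    have hpw' := List.pairwise_reverse.2 hpw
    exact ⟨List.ne_nil_of_length_pos hpos,
      ⟨hpw'.imp (·.1), by simpa using fun p hp => (hmem p hp).1⟩, hpw'.imp (·.2),
      fun p hp => (hmem p hp).2⟩
  · rintro ⟨hne, ⟨hfst, hlt⟩, hsnd, hle⟩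
    refine ⟨List.length_pos_iff.2 hne, ?_,
      fun p hp => ⟨hlt p.1 (List.mem_map_of_mem (List.mem_reverse.2 hp)), hle p hp⟩,
      List.pairwise_reverse.1 (List.pairwise_and_iff.2 ⟨hfst, hsnd⟩)⟩
    simpa using (List.sublist_reverse_range_iff.2 ⟨List.pairwise_map.2 hfst, hlt⟩).length_le

def toConfig (l : List (ℕ × ℕ)) : List ℕ × List ℕ :=
  (l.reverse.map Prod.fst, (l.reverse.map Prod.snd).filter (0 < ·))

def ofConfig (p : List ℕ × List ℕ) : List (ℕ × ℕ) :=
  (p.1.zip (p.2 ++ List.replicate (p.1.length - p.2.length) 0)).reverse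

section

variable {n : ℕ} {l : List (ℕ × ℕ)} {p : List ℕ × List ℕ}

theorem toConfig_snd_append_replicate (h : IsIndexingMatrix n l) :
    (toConfig l).2 ++ List.replicate ((toConfig l).1.length - (toConfig l).2.length) 0 =
      l.reverse.map Prod.snd := by
  have hsnd := (isIndexingMatrix_iff.1 h).2.2.1
  rw [toConfig, List.length_map, ← List.length_map (f := Prod.snd)]
  exact (List.eq_filter_pos_append_replicate (hsnd.imp (·.1))).symm

theorem isConfig_toConfig (h : IsIndexingMatrix n l) : IsConfig n 0 (toConfig l) := by
  obtain ⟨-, hfst, hsnd, hle⟩ := isIndexingMatrix_iff.1 h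
  refine ⟨hfst, List.sublist_reverse_range'_iff.2 ⟨?_, ?_⟩, ?_⟩
  · refine (hsnd.filter _).imp_of_mem fun {b b'} _ hb' hbb' => ?_
    have := (List.mem_filter.1 hb').2
    simp only [decide_eq_true_eq] at this
    omega
  · intro c hc
    obtain ⟨hc, hpos⟩ := List.mem_filter.1 hc
    obtain ⟨q, hq, rfl⟩ := List.mem_map.1 hc
    have := h.2.2.1 q (List.mem_reverse.1 hq)
    simp only [decide_eq_true_eq] at hpos
    omega
  · rw [Dominated.zero_iff_forall₂, toConfig_snd_append_replicate h, toConfig,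
      List.forall₂_map_left_iff, List.forall₂_map_right_iff, List.forall₂_same]
    exact fun q hq => hle q (List.mem_reverse.1 hq)

theorem ofConfig_toConfig (h : IsIndexingMatrix n l) : ofConfig (toConfig l) = l := by
  rw [ofConfig, toConfig_snd_append_replicate h, toConfig, ← List.zip_of_prod rfl rfl,
    List.reverse_reverse]

theorem isIndexingMatrix_ofConfig (hp : IsConfig n 0 p) (hne : p.1 ≠ []) :
    IsIndexingMatrix n (ofConfig p) := by
  obtain ⟨as, cs⟩ := p
  obtain ⟨has, hcs, hdom⟩ := hp
  rw [Dominated.zero_iff_forall₂] at hdom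
  set bs := cs ++ List.replicate (as.length - cs.length) 0
  have hlen := hdom.length_eq
  rw [isIndexingMatrix_iff, ofConfig, List.reverse_reverse, List.map_fst_zip hlen.ge,
    List.map_snd_zip hlen.le]
  refine ⟨?_, has, ?_, fun q hq => ?_⟩
  · rwa [Ne, List.reverse_eq_nil_iff, ← List.length_eq_zero_iff, List.length_zip, hlen, min_self,
      List.length_eq_zero_iff]
  · obtain ⟨hcs, hpos⟩ := List.sublist_reverse_range'_iff.1 hcs
    refine List.pairwise_append.2 ⟨hcs.imp fun h => ⟨h.le, fun e => absurd e h.ne⟩, ?_, ?_⟩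
    · simp
    · intro c _ z hz
      simp [List.eq_of_mem_replicate hz]
  · exact (List.forall₂_iff_zip.1 hdom.flip).2 (List.mem_reverse.1 hq)

theorem toConfig_ofConfig (hp : IsConfig n 0 p) : toConfig (ofConfig p) = p := by
  obtain ⟨as, cs⟩ := p
  have hlen := ((Dominated.zero_iff_forall₂ cs as).1 hp.2.2).length_eq
  have hpos := (List.sublist_reverse_range'_iff.1 hp.2.1).2
  simpa [toConfig, ofConfig, List.map_fst_zip hlen.ge, List.map_snd_zip hlen.le] using
    fun c hc => (hpos c hc).1

end

def equivConfig (n : ℕ) :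
    {l // IsIndexingMatrix n l} ≃ {p // IsConfig n 0 p ∧ p.1 ≠ []} where
  toFun l := ⟨toConfig l.1, isConfig_toConfig l.2, by
    simpa [toConfig] using List.length_pos_iff.1 l.2.1⟩
  invFun p := ⟨ofConfig p.1, isIndexingMatrix_ofConfig p.2.1 p.2.2⟩
  left_inv l := Subtype.ext (ofConfig_toConfig l.2)
  right_inv p := Subtype.ext (toConfig_ofConfig p.2.1)

end IndexingMatrix

theorem stmt0_general (n : ℕ) :
    Nat.card {l : List (ℕ × ℕ) // IsIndexingMatrix n l} + 1 =
      (2 * n).choose n := by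
  have hnil : ([], []) ∈ IndexingMatrix.configs n 0 :=
    IndexingMatrix.mem_configs.2 (by simp [IndexingMatrix.IsConfig])
  rw [Nat.card_congr ((IndexingMatrix.equivConfig n).trans
      (Equiv.subtypeEquivRight fun _ => IndexingMatrix.mem_erase_configs_zero).symm),
    Nat.card_eq_finsetCard, card_erase_of_mem hnil, IndexingMatrix.card_configs,
    centralWindow_zero_right, Nat.sub_add_cancel (Nat.choose_pos (by omega))]

/-- the number of indexing matrices on `n` points, together with
the degenerate one, is the central binomial coefficient `C(2n, n)`. -/
theorem stmt0 (n : ℕ) (hn : 1 ≤ n) :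
    Nat.card {l : List (ℕ × ℕ) // IsIndexingMatrix n l} + 1 =
      (2 * n).choose n :=
  stmt0_general n
end

section
/- The number of positive indexing matrices (including the degenerate one) equals the n-th Catalan number C_n = (1/(n+1))·C(2n,n). -/
open Finset

/-!
A Dyck path is determined by its valleys. Recording each valley (a `DU` corner) by the numbers
`(a, b)` of up- and down-steps before it gives a list of points, strictly increasing in both
coordinates, with `0 < b ≤ a < n`; conversely any such list is the valley list of exactly one Dyck
path of semilength `n`, the one which between consecutive points first goes up and then down.
These lists are the positive indexing matrices together with the empty list, which corresponds to
the path `Uⁿ Dⁿ`, the degenerate matrix. So their number is the number of Dyck paths, `C_n`.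
-/

namespace IndexingMatrix

open List DyckStep

/-- The path from the lattice point `p` through the points of `l` to `(n, n)`, where a point
`(a, b)` means `a` up-steps and `b` down-steps have been taken; every leg goes up, then down. -/
def valleyPath (n : ℕ) : ℕ × ℕ → List (ℕ × ℕ) → List DyckStep
  | p, [] => replicate (n - p.1) U ++ replicate (n - p.2) D
  | p, q :: l => replicate (q.1 - p.1) U ++ (replicate (q.2 - p.2) D ++ valleyPath n q l)

/-- The valleys of a path started after `u` up-steps and `d` down-steps. -/
def valleys : ℕ → ℕ → List DyckStep → List (ℕ × ℕ)
  | _, _, [] => []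
  | u, d, U :: w => valleys (u + 1) d w
  | _, _, [D] => []
  | u, d, D :: D :: w => valleys u (d + 1) (D :: w)
  | u, d, D :: U :: w => (u, d + 1) :: valleys u (d + 1) (U :: w)

/-- `q` can be the valley following `p` on a Dyck path of semilength `n`. -/
def ValleyStep (n : ℕ) (p q : ℕ × ℕ) : Prop :=
  p.1 < q.1 ∧ p.2 < q.2 ∧ q.2 ≤ q.1 ∧ q.1 < n

instance (n : ℕ) : IsTrans (ℕ × ℕ) (ValleyStep n) :=
  ⟨fun _ _ _ h₁ h₂ => ⟨h₁.1.trans h₂.1, h₁.2.1.trans h₂.2.1, h₂.2.2⟩⟩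

/-- Started after `u` up-steps and `d` down-steps, the path `w` never goes below the diagonal. -/
def BallotFrom (u d : ℕ) (w : List DyckStep) : Prop :=
  ∀ i, d + count D (take i w) ≤ u + count U (take i w)

section Valleys

variable {u d : ℕ}

theorem valleys_replicate_U_append (p : ℕ) (w : List DyckStep) :
    valleys u d (replicate p U ++ w) = valleys (u + p) d w := by
  induction p generalizing u with
  | zero => rfl
  | succ p ih => rw [replicate_succ, cons_append, valleys, ih, Nat.add_right_comm, add_assoc]

theorem valleys_replicate_D (q : ℕ) : valleys u d (replicate q D) = [] := by
  induction q generalizing d with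
  | zero => rfl
  | succ q ih =>
    cases q with
    | zero => rfl
    | succ q => rw [replicate_succ, replicate_succ, valleys, ← replicate_succ, ih]

theorem valleys_replicate_D_append_U_cons {q : ℕ} (hq : q ≠ 0) (w : List DyckStep) :
    valleys u d (replicate q D ++ U :: w) = (u, d + q) :: valleys u (d + q) (U :: w) := by
  obtain ⟨q, rfl⟩ := Nat.exists_eq_succ_of_ne_zero hq
  induction q generalizing d with
  | zero => rfl
  | succ q ih =>
    rw [replicate_succ, cons_append, replicate_succ, cons_append, valleys.eq_4, ← cons_append,
      ← replicate_succ, ih q.succ_ne_zero, Nat.add_right_comm, add_assoc]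

end Valleys

section Ballot

variable {u d : ℕ} {w : List DyckStep}

theorem BallotFrom.le (h : BallotFrom u d w) : d ≤ u := by simpa using h 0

theorem ballotFrom_nil : BallotFrom u d [] ↔ d ≤ u := by simp [BallotFrom]

theorem ballotFrom_U_cons : BallotFrom u d (U :: w) ↔ d ≤ u ∧ BallotFrom (u + 1) d w := by
  refine ⟨fun h => ⟨h.le, fun i => ?_⟩, fun ⟨hdu, h⟩ i => ?_⟩
  · simpa [add_assoc, add_comm 1] using h (i + 1)
  · cases i with
    | zero => simpa using hdu
    | succ i => simpa [add_assoc, add_comm 1] using h i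

theorem ballotFrom_D_cons : BallotFrom u d (D :: w) ↔ d ≤ u ∧ BallotFrom u (d + 1) w := by
  refine ⟨fun h => ⟨h.le, fun i => ?_⟩, fun ⟨hdu, h⟩ i => ?_⟩
  · simpa [add_assoc, add_comm 1] using h (i + 1)
  · cases i with
    | zero => simpa using hdu
    | succ i => simpa [add_assoc, add_comm 1] using h i

theorem ballotFrom_replicate_U_append (p : ℕ) :
    BallotFrom u d (replicate p U ++ w) ↔ d ≤ u ∧ BallotFrom (u + p) d w := by
  induction p generalizing u with
  | zero => exact ⟨fun h => ⟨h.le, h⟩, And.right⟩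
  | succ p ih =>
    rw [replicate_succ, cons_append, ballotFrom_U_cons, ih, Nat.add_right_comm, add_assoc]
    exact ⟨fun h => ⟨h.1, h.2.2⟩, fun h => ⟨h.1, by omega, h.2⟩⟩

theorem ballotFrom_replicate_D_append (q : ℕ) :
    BallotFrom u d (replicate q D ++ w) ↔ d ≤ u ∧ BallotFrom u (d + q) w := by
  induction q generalizing d with
  | zero => exact ⟨fun h => ⟨h.le, h⟩, And.right⟩
  | succ q ih =>
    rw [replicate_succ, cons_append, ballotFrom_D_cons, ih, Nat.add_right_comm, add_assoc]
    exact ⟨fun h => ⟨h.1, h.2.2⟩, fun h => ⟨h.1, by have := h.2.le; omega, h.2⟩⟩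

end Ballot

section ValleyPath

variable {n : ℕ} {p : ℕ × ℕ} {l : List (ℕ × ℕ)}

theorem exists_valleyPath_eq_U_cons (h : IsChain (ValleyStep n) (p :: l)) (hp : p.1 < n) :
    ∃ w, valleyPath n p l = U :: w := by
  obtain _ | ⟨q, l⟩ := l
  · exact ⟨_, by rw [valleyPath, ← Nat.succ_pred_eq_of_pos (Nat.sub_pos_of_lt hp)]; rfl⟩
  · have hpq := (isChain_cons_cons.1 h).1.1
    exact ⟨_, by rw [valleyPath, ← Nat.succ_pred_eq_of_pos (Nat.sub_pos_of_lt hpq)]; rfl⟩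

theorem valleys_valleyPath (h : IsChain (ValleyStep n) (p :: l)) :
    valleys p.1 p.2 (valleyPath n p l) = l := by
  induction l generalizing p with
  | nil => rw [valleyPath, valleys_replicate_U_append, valleys_replicate_D]
  | cons c l ih =>
    obtain ⟨⟨hac, hbc, -, hcn⟩, hc⟩ := isChain_cons_cons.1 h
    obtain ⟨w, hw⟩ := exists_valleyPath_eq_U_cons hc hcn
    rw [valleyPath, valleys_replicate_U_append, hw, valleys_replicate_D_append_U_cons (by omega),
      ← hw, Nat.add_sub_cancel' hac.le, Nat.add_sub_cancel' hbc.le, ih hc]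

theorem count_valleyPath (h : IsChain (ValleyStep n) (p :: l)) :
    count U (valleyPath n p l) = n - p.1 ∧ count D (valleyPath n p l) = n - p.2 := by
  induction l generalizing p with
  | nil => simp [valleyPath, count_replicate]
  | cons c l ih =>
    obtain ⟨⟨hpc₁, hpc₂, hc, hcn⟩, hcl⟩ := isChain_cons_cons.1 h
    obtain ⟨ihU, ihD⟩ := ih hcl
    simp [valleyPath, count_replicate, ihU, ihD]
    omega

theorem ballotFrom_valleyPath (h : IsChain (ValleyStep n) (p :: l)) (hp : p.2 ≤ p.1) :
    BallotFrom p.1 p.2 (valleyPath n p l) := by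
  induction l generalizing p with
  | nil =>
    rw [valleyPath, ← append_nil (replicate _ D), ballotFrom_replicate_U_append,
      ballotFrom_replicate_D_append, ballotFrom_nil]
    omega
  | cons c l ih =>
    obtain ⟨⟨hpc₁, hpc₂, hc, -⟩, hcl⟩ := isChain_cons_cons.1 h
    rw [valleyPath, ballotFrom_replicate_U_append, ballotFrom_replicate_D_append,
      Nat.add_sub_cancel' hpc₁.le, Nat.add_sub_cancel' hpc₂.le]
    exact ⟨hp, by omega, ih hcl hc⟩

end ValleyPath


theorem exists_eq_replicate_append (s : DyckStep) (w : List DyckStep) :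
    ∃ p r, w = replicate p s ++ r ∧ r.head? ≠ some s := by
  induction w with
  | nil => exact ⟨0, [], rfl, by simp⟩
  | cons x w ih =>
    by_cases hx : x = s
    · obtain ⟨p, r, rfl, hr⟩ := ih
      exact ⟨p + 1, r, by rw [hx, replicate_succ, cons_append], hr⟩
    · exact ⟨0, x :: w, rfl, by simpa using hx⟩

theorem exists_isChain_valleyPath_eq {n : ℕ} (w : List DyckStep) (hw : w.head? ≠ some D)
    {u d : ℕ} (hU : u + count U w = n) (hD : d + count D w = n) (hb : BallotFrom u d w) :
    ∃ l, IsChain (ValleyStep n) ((u, d) :: l) ∧ valleyPath n (u, d) l = w := by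
  induction hlen : w.length using Nat.strong_induction_on generalizing w u d with
  | _ k ih =>
    obtain ⟨p, w', rfl, hw'⟩ := exists_eq_replicate_append U w
    obtain ⟨q, r, rfl, hr⟩ := exists_eq_replicate_append D w'
    simp only [count_append, count_replicate_self, count_replicate, beq_iff_eq, reduceCtorEq,
      ↓reduceIte, zero_add] at hU hD
    rw [ballotFrom_replicate_U_append, ballotFrom_replicate_D_append] at hb
    replace hb := hb.2.2
    obtain _ | ⟨x, r⟩ := r
    · refine ⟨[], .singleton _, ?_⟩
      simp only [count_nil, add_zero] at hU hD
      simp only [valleyPath, append_nil]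
      congr 2 <;> omega
    obtain rfl : x = U := by cases x <;> simp_all
    have hq : q ≠ 0 := by rintro rfl; simp at hw'
    have hp : p ≠ 0 := by
      rintro rfl
      obtain ⟨q, rfl⟩ := Nat.exists_eq_succ_of_ne_zero hq
      simp [replicate_succ] at hw
    rw [count_cons_self] at hU
    obtain ⟨l, hl, hlw⟩ := ih _ (by simp [← hlen]; omega) (U :: r) (by simp)
      (by rw [count_cons_self]; omega) (by omega) hb rfl
    refine ⟨(u + p, d + q) :: l,
      isChain_cons_cons.2 ⟨⟨by omega, by omega, hb.le, by omega⟩, hl⟩, ?_⟩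
    simp only [valleyPath, hlw, Nat.add_sub_cancel_left]

variable (n : ℕ)

def valleyDyckWord (l : {l : List (ℕ × ℕ) // IsChain (ValleyStep n) ((0, 0) :: l)}) :
    {p : DyckWord // p.semilength = n} :=
  ⟨{ toList := valleyPath n (0, 0) l
     count_U_eq_count_D := by rw [(count_valleyPath l.2).1, (count_valleyPath l.2).2]
     count_D_le_count_U := fun i => by simpa using ballotFrom_valleyPath l.2 le_rfl i },
    (count_valleyPath l.2).1⟩

theorem valleyDyckWord_bijective : Function.Bijective (valleyDyckWord n) := by
  refine ⟨fun l₁ l₂ h => Subtype.ext ?_, fun ⟨p, hp⟩ => ?_⟩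
  · have h' := congrArg (fun p => valleys 0 0 p.1.toList) h
    simpa only [valleyDyckWord, valleys_valleyPath l₁.2, valleys_valleyPath l₂.2] using h'
  · have hhead : p.toList.head? ≠ some D := by
      cases hp' : p.toList with
      | nil => simp
      | cons x w =>
        have hx := p.head_eq_U (by simp [hp'])
        simp only [hp', head_cons] at hx
        simp [hx]
    obtain ⟨l, hl, hlp⟩ := exists_isChain_valleyPath_eq p.toList hhead (u := 0) (d := 0)
      (by simpa [DyckWord.semilength] using hp)
      (by simpa [← p.count_U_eq_count_D, DyckWord.semilength] using hp)
      (fun i => by simpa using p.count_D_le_count_U i)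
    exact ⟨⟨l, hl⟩, Subtype.ext (DyckWord.ext hlp)⟩

theorem card_isChain_valleyStep :
    Nat.card {l : List (ℕ × ℕ) // IsChain (ValleyStep n) ((0, 0) :: l)} = catalan n := by
  rw [Nat.card_eq_of_bijective _ (valleyDyckWord_bijective n), Nat.card_eq_fintype_card,
    DyckWord.card_dyckWord_semilength_eq_catalan]

variable {n} in
theorem isPositiveIndexingMatrix_iff {l : List (ℕ × ℕ)} :
    IsPositiveIndexingMatrix n l ↔ l ≠ [] ∧ IsChain (ValleyStep n) ((0, 0) :: l) := by
  rw [isChain_iff_pairwise, List.pairwise_cons]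
  constructor
  · rintro ⟨⟨hlen, -, hmem, hpw⟩, hpos⟩
    refine ⟨ne_nil_of_length_pos hlen,
      fun q hq => ⟨(hpos q hq).1, (hpos q hq).2, (hmem q hq).2, (hmem q hq).1⟩,
      hpw.imp_of_mem fun {a b} ha hb hab => ⟨hab.1, ?_, (hmem b hb).2, (hmem b hb).1⟩⟩
    -- a repeated positive entry in the second row is excluded
    exact hab.2.1.lt_of_ne fun he => (hpos a ha).2.ne' (hab.2.2 he)
  · rintro ⟨hne, hhead, htail⟩
    have hfst : (l.map Prod.fst).Nodup := (htail.map Prod.fst fun _ _ h => h.1).nodup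
    have hsub : l.map Prod.fst ⊆ range n := fun x hx => by
      obtain ⟨q, hq, rfl⟩ := mem_map.1 hx
      exact List.mem_range.2 (hhead q hq).2.2.2
    have hlen : l.length ≤ n := by simpa using (hfst.subperm hsub).length_le
    exact ⟨⟨length_pos_of_ne_nil hne, hlen,
      fun q hq => ⟨(hhead q hq).2.2.2, (hhead q hq).2.2.1⟩,
      htail.imp fun h => ⟨h.1, h.2.1.le, fun he => absurd he h.2.1.ne⟩⟩,
      fun q hq => ⟨(hhead q hq).1, (hhead q hq).2.1⟩⟩

theorem card_positiveIndexingMatrix_add_one :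
    Nat.card {l : List (ℕ × ℕ) // IsPositiveIndexingMatrix n l} + 1 =
      Nat.card {l : List (ℕ × ℕ) // IsChain (ValleyStep n) ((0, 0) :: l)} := by
  have hfin : {l : List (ℕ × ℕ) | IsChain (ValleyStep n) ((0, 0) :: l)}.Finite :=
    Set.finite_coe_iff.1 (Finite.of_injective _ (valleyDyckWord_bijective n).1)
  have hset : {l | IsChain (ValleyStep n) ((0, 0) :: l)} =
      insert [] {l | IsPositiveIndexingMatrix n l} := by
    ext l
    by_cases hl : l = [] <;> simp [hl, isPositiveIndexingMatrix_iff]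
  have hnil : [] ∉ {l | IsPositiveIndexingMatrix n l} := by simp [isPositiveIndexingMatrix_iff]
  change Set.ncard {l | IsPositiveIndexingMatrix n l} + 1 =
    Set.ncard {l | IsChain (ValleyStep n) ((0, 0) :: l)}
  rw [hset, Set.ncard_insert_of_notMem hnil (hfin.subset (hset ▸ Set.subset_insert _ _))]

end IndexingMatrix

theorem stmt1_general (n : ℕ) :
    Nat.card {l : List (ℕ × ℕ) // IsPositiveIndexingMatrix n l} + 1 =
      catalan n := by
  rw [IndexingMatrix.card_positiveIndexingMatrix_add_one, IndexingMatrix.card_isChain_valleyStep]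

/-- the number of positive indexing matrices (including the
degenerate one) is the `n`-th Catalan number. -/
theorem stmt1 (n : ℕ) (hn : 1 ≤ n) :
    Nat.card {l : List (ℕ × ℕ) // IsPositiveIndexingMatrix n l} + 1 =
      catalan n :=
  stmt1_general n
end

section
/- For n ≥ 2, θ_1^{(n)} = C_{n-1}, the (n-1)-st Catalan number. -/
open Finset

/-!
A positive indexing matrix with `c₁₁ = 1` has first column `(1, 1)`, and positivity forces both
rows of the remaining columns to increase strictly: it is `(1, 1)` followed by a ladder of points
`(a, b)` with `1 < b ≤ a ≤ n - 1`. Splitting the ladders above `(A, B)` according to whether the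
next top entry is `A + 1` gives, for their number `G p q` with `p = N - A`, `q = A - B`, the
recurrence `G (p + 1) q = G p (q + 1) + ∑ t ≤ q, G p t`. Since the Catalan series satisfies
`C = 1 + X C²`, the coefficients `[Xᵖ] C^(q + 2)` satisfy the same recurrence, so
`θ₁⁽ⁿ⁾ = [Xⁿ⁻²] C² = C_{n-1}`.
-/

theorem Finset.sum_Ioc_tsub_eq_sum_range {M : Type*} [AddCommMonoid M] (f : ℕ → M) (a b : ℕ) :
    ∑ i ∈ Ioc a b, f (b - i) = ∑ t ∈ range (b - a), f t := by
  refine sum_nbij' (b - ·) (b - ·) ?_ ?_ ?_ ?_ fun _ _ => rfl <;> intro i hi <;>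
    simp only [mem_Ioc, mem_range] at hi ⊢ <;> omega

namespace PowerSeries

theorem catalanSeries_pow_succ (k : ℕ) :
    catalanSeries ^ (k + 1) = catalanSeries ^ k + X * catalanSeries ^ (k + 2) := by
  calc catalanSeries ^ (k + 1) = catalanSeries ^ k * (catalanSeries ^ 2 * X + 1) := by
        rw [catalanSeries_sq_mul_X_add_one, pow_succ]
    _ = catalanSeries ^ k + X * catalanSeries ^ (k + 2) := by ring

theorem coeff_succ_catalanSeries_pow_succ (p k : ℕ) :
    coeff (p + 1) (catalanSeries ^ (k + 1)) =
      coeff (p + 1) (catalanSeries ^ k) + coeff p (catalanSeries ^ (k + 2)) := by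
  rw [catalanSeries_pow_succ, map_add, coeff_succ_X_mul]

theorem coeff_zero_catalanSeries_pow (k : ℕ) : coeff 0 (catalanSeries ^ k) = 1 := by
  simp

theorem coeff_catalanSeries_sq (p : ℕ) : coeff p (catalanSeries ^ 2) = catalan (p + 1) := by
  simpa [coeff_one] using (coeff_succ_catalanSeries_pow_succ p 0).symm

theorem sum_range_coeff_catalanSeries_pow (p m : ℕ) :
    ∑ t ∈ range m, coeff p (catalanSeries ^ (t + 2)) = coeff (p + 1) (catalanSeries ^ m) := by
  induction m with
  | zero => simp [coeff_one]
  | succ m ih => rw [sum_range_succ, ih, coeff_succ_catalanSeries_pow_succ]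

end PowerSeries

open PowerSeries

def IsLadder (N A B : ℕ) (l : List (ℕ × ℕ)) : Prop :=
  (∀ p ∈ l, A < p.1 ∧ B < p.2 ∧ p.2 ≤ p.1 ∧ p.1 ≤ N) ∧
    l.Pairwise (fun p q => p.1 < q.1 ∧ p.2 < q.2)

namespace IsLadder

variable {N A B : ℕ} {l : List (ℕ × ℕ)}

theorem nil (N A B : ℕ) : IsLadder N A B [] := by simp [IsLadder]

theorem cons_iff {p : ℕ × ℕ} {t : List (ℕ × ℕ)} :
    IsLadder N A B (p :: t) ↔
      (A < p.1 ∧ B < p.2 ∧ p.2 ≤ p.1 ∧ p.1 ≤ N) ∧ IsLadder N p.1 p.2 t := by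
  simp only [IsLadder, List.mem_cons, forall_eq_or_imp, List.pairwise_cons]
  grind

theorem eq_nil_of_le (hl : IsLadder N A B l) (h : N ≤ A) : l = [] := by
  cases l with
  | nil => rfl
  | cons p t => have := (cons_iff.1 hl).1; omega

theorem length_le (hl : IsLadder N A B l) : l.length ≤ N - A := by
  have hnodup : (l.map Prod.fst).Nodup := List.pairwise_map.2 (hl.2.imp fun h => h.1.ne)
  calc l.length = (l.map Prod.fst).toFinset.card := by
        rw [List.toFinset_card_of_nodup hnodup, List.length_map]
    _ ≤ (Ioc A N).card := card_le_card fun a ha => by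
        obtain ⟨p, hp, rfl⟩ := List.mem_map.1 (List.mem_toFinset.1 ha)
        have := hl.1 p hp
        exact mem_Ioc.2 ⟨this.1, this.2.2.2⟩
    _ = N - A := Nat.card_Ioc A N

theorem iff_of_lt (h : A < N) :
    IsLadder N A B l ↔ IsLadder N (A + 1) B l ∨
      ∃ b ∈ Ioc B (A + 1), ∃ t, IsLadder N (A + 1) b t ∧ (A + 1, b) :: t = l := by
  cases l with
  | nil => simp [nil]
  | cons p t =>
    obtain ⟨a, b⟩ := p
    simp only [cons_iff, mem_Ioc, List.cons.injEq, Prod.mk.injEq]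
    constructor
    · rintro ⟨hp, ht⟩
      by_cases ha : a = A + 1
      · exact Or.inr ⟨b, by omega, t, ha ▸ ht, ⟨ha.symm, rfl⟩, rfl⟩
      · exact Or.inl ⟨by omega, ht⟩
    · rintro (⟨hp, ht⟩ | ⟨b, hb, t, ht, ⟨rfl, rfl⟩, rfl⟩)
      · exact ⟨by omega, ht⟩
      · exact ⟨by omega, ht⟩

end IsLadder

def ladders (N A B : ℕ) : Finset (List (ℕ × ℕ)) :=
  if A < N then
    ladders N (A + 1) B ∪
      (Ioc B (A + 1)).biUnion fun b => (ladders N (A + 1) b).image ((A + 1, b) :: ·)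
  else {[]}
termination_by N - A

theorem mem_ladders {N A B : ℕ} {l : List (ℕ × ℕ)} : l ∈ ladders N A B ↔ IsLadder N A B l := by
  induction A, B using ladders.induct N generalizing l with
  | case1 A B h ih₁ ih₂ =>
    rw [ladders, if_pos h, IsLadder.iff_of_lt h]
    simp only [mem_union, mem_biUnion, mem_image, ih₁, ih₂]
  | case2 A B h =>
    rw [ladders, if_neg h, mem_singleton]
    exact ⟨fun hl => hl ▸ IsLadder.nil N A B, fun hl => hl.eq_nil_of_le (not_lt.1 h)⟩

theorem card_ladders_of_lt {N A B : ℕ} (h : A < N) :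
    #(ladders N A B) = #(ladders N (A + 1) B) + ∑ b ∈ Ioc B (A + 1), #(ladders N (A + 1) b) := by
  have hdisj : Disjoint (ladders N (A + 1) B)
      ((Ioc B (A + 1)).biUnion fun b => (ladders N (A + 1) b).image ((A + 1, b) :: ·)) := by
    simp only [disjoint_left, mem_biUnion, mem_image, mem_ladders, not_exists, not_and]
    rintro _ hl b - t - rfl
    have := (IsLadder.cons_iff.1 hl).1.1
    omega
  have hpair : (Ioc B (A + 1) : Set ℕ).PairwiseDisjoint
      fun b => (ladders N (A + 1) b).image ((A + 1, b) :: ·) := by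
    intro b _ b' _ hbb'
    simp only [Function.onFun, disjoint_left, mem_image, not_exists, not_and]
    rintro _ ⟨t, -, rfl⟩ t' - h
    exact hbb' (Prod.ext_iff.1 (List.cons.inj h).1).2.symm
  rw [ladders, if_pos h, card_union_of_disjoint hdisj, card_biUnion hpair]
  simp only [card_image_of_injective _ List.cons_injective]

theorem card_ladders {N A B : ℕ} (h : B ≤ A) :
    #(ladders N A B) = coeff (N - A) (catalanSeries ^ (A - B + 2)) := by
  induction A, B using ladders.induct N with
  | case1 A B hA ih₁ ih₂ =>
    obtain ⟨p, hp⟩ : ∃ p, N - A = p + 1 := ⟨N - A - 1, by omega⟩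
    have hp' : N - (A + 1) = p := by omega
    have hsum : ∑ b ∈ Ioc B (A + 1), #(ladders N (A + 1) b) =
        ∑ t ∈ range (A + 1 - B), coeff p (catalanSeries ^ (t + 2)) := by
      rw [← sum_Ioc_tsub_eq_sum_range]
      refine sum_congr rfl fun b hb => ?_
      rw [ih₂ b (mem_Ioc.1 hb).2, hp']
    rw [card_ladders_of_lt hA, ih₁ (by omega), hsum, sum_range_coeff_catalanSeries_pow, hp', hp,
      show A - B + 2 = (A + 1 - B) + 1 by omega, coeff_succ_catalanSeries_pow_succ,
      show A + 1 - B + 2 = A - B + 3 by omega, add_comm]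
  | case2 A B hA =>
    rw [ladders, if_neg hA, card_singleton, Nat.sub_eq_zero_of_le (not_lt.1 hA),
      coeff_zero_catalanSeries_pow]

theorem isPositiveIndexingMatrix_and_head_eq_one_iff {n : ℕ} (hn : 2 ≤ n) {l : List (ℕ × ℕ)} :
    IsPositiveIndexingMatrix n l ∧ l.head?.map Prod.fst = some 1 ↔
      ∃ t, IsLadder (n - 1) 1 1 t ∧ (1, 1) :: t = l := by
  constructor
  · rintro ⟨⟨⟨-, -, hbound, hpw⟩, hpos⟩, hhead⟩
    obtain ⟨⟨a, b⟩, t, rfl⟩ : ∃ p t, l = p :: t := by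
      cases l with
      | nil => simp at hhead
      | cons p t => exact ⟨p, t, rfl⟩
    obtain rfl : a = 1 := by simpa using hhead
    obtain rfl : b = 1 := by
      have hb : b ≤ 1 := (hbound _ List.mem_cons_self).2
      have hb' : 0 < b := (hpos _ List.mem_cons_self).2
      omega
    rw [List.pairwise_cons] at hpw
    refine ⟨t, ⟨fun p hp => ?_, hpw.2.imp_of_mem fun hx _ hxy => ?_⟩, rfl⟩
    · have h₁ : 1 < p.1 ∧ 1 ≤ p.2 ∧ (1 = p.2 → 1 = 0) := hpw.1 p hp
      have h₂ := hbound p (List.mem_cons_of_mem _ hp)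
      omega
    · have := (hpos _ (List.mem_cons_of_mem _ hx)).2
      exact ⟨hxy.1, lt_of_le_of_ne hxy.2.1 fun h => by have := hxy.2.2 h; omega⟩
  · rintro ⟨t, ⟨hbound, hpw⟩, rfl⟩
    have hlen := IsLadder.length_le ⟨hbound, hpw⟩
    refine ⟨⟨⟨by simp, by simp; omega, ?_, ?_⟩, ?_⟩, rfl⟩
    · simp only [List.mem_cons, forall_eq_or_imp]
      exact ⟨⟨by omega, le_rfl⟩, fun p hp => ⟨by have := hbound p hp; omega, (hbound p hp).2.2.1⟩⟩
    · refine List.pairwise_cons.2 ⟨fun p hp => ?_, hpw.imp fun h => ⟨h.1, h.2.le, by omega⟩⟩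
      have := hbound p hp
      omega
    · simp only [List.mem_cons, forall_eq_or_imp]
      exact ⟨by simp, fun p hp => by have := hbound p hp; omega⟩

/-- for `n ≥ 2`, `θ_1^{(n)} = C_{n-1}`. -/
theorem stmt2 (n : ℕ) (hn : 2 ≤ n) : theta n 1 = catalan (n - 1) := by
  have hmem (l : List (ℕ × ℕ)) : IsPositiveIndexingMatrix n l ∧ l.head?.map Prod.fst = some 1 ↔
      l ∈ (ladders (n - 1) 1 1).image ((1, 1) :: ·) := by
    simpa only [mem_image, mem_ladders] using isPositiveIndexingMatrix_and_head_eq_one_iff hn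
  rw [theta, Nat.card_congr (Equiv.subtypeEquivRight hmem), Nat.card_eq_finsetCard,
    card_image_of_injective _ List.cons_injective, card_ladders le_rfl, Nat.sub_self,
    coeff_catalanSeries_sq]
  congr 1
  omega
end

section
/- For n > 2 and k ∈ [2, n-2], the recursion θ_k^{(n)} = θ_{k-1}^{(n-1)} + θ_{k+1}^{(n)} holds. -/
open Finset

namespace Stmt4Aux

/-- Convenient predicate: the sets counted by `theta`. -/
def Good (n k : ℕ) (l : List (ℕ × ℕ)) : Prop :=
  IsPositiveIndexingMatrix n l ∧ l.head?.map Prod.fst = some k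

/-- Characterization of positive indexing matrices (minus nonemptiness). -/
def Q (n : ℕ) (l : List (ℕ × ℕ)) : Prop :=
  l.length ≤ n ∧ (∀ p ∈ l, 0 < p.2 ∧ p.2 ≤ p.1 ∧ p.1 < n) ∧
    l.Pairwise (fun p q : ℕ × ℕ => p.1 < q.1 ∧ p.2 < q.2)

lemma pim_iff (n : ℕ) (l : List (ℕ × ℕ)) :
    IsPositiveIndexingMatrix n l ↔ 1 ≤ l.length ∧ Q n l := by
  constructor
  · rintro ⟨⟨h1, h2, h3, h4⟩, h5⟩
    refine ⟨h1, h2, fun p hp => ⟨(h5 p hp).2, (h3 p hp).2, (h3 p hp).1⟩, ?_⟩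
    refine h4.imp_of_mem (fun {a b} ha hb hr => ⟨hr.1, ?_⟩)
    obtain ⟨-, hle, heq⟩ := hr
    rcases lt_or_eq_of_le hle with h | h
    · exact h
    · have := heq h
      have := (h5 a ha).2
      omega
  · rintro ⟨h1, h2, h3, h4⟩
    refine ⟨⟨h1, h2, fun p hp => ⟨(h3 p hp).2.2, (h3 p hp).2.1⟩, ?_⟩,
      fun p hp => ⟨lt_of_lt_of_le (h3 p hp).1 (h3 p hp).2.1, (h3 p hp).1⟩⟩
    exact h4.imp (fun {a b} hr => ⟨hr.1, le_of_lt hr.2, fun h => absurd h (ne_of_lt hr.2)⟩)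

lemma good_cons (n k a b : ℕ) (t : List (ℕ × ℕ)) :
    Good n k ((a, b) :: t) ↔ a = k ∧ Q n ((a, b) :: t) := by
  constructor
  · rintro ⟨hpim, hh⟩
    have hq := (pim_iff _ _).1 hpim
    simp only [List.head?_cons, Option.map_some, Option.some.injEq] at hh
    exact ⟨hh, hq.2⟩
  · rintro ⟨rfl, hq⟩
    exact ⟨(pim_iff _ _).2 ⟨by simp, hq⟩, by simp⟩

lemma good_shape {n k : ℕ} {l : List (ℕ × ℕ)} (h : Good n k l) :
    ∃ b t, l = (k, b) :: t := by
  obtain ⟨hpim, hh⟩ := h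
  cases l with
  | nil => simp at hh
  | cons p t =>
      simp only [List.head?_cons, Option.map_some, Option.some.injEq] at hh
      exact ⟨p.2, t, by rw [← hh]⟩

/-- Length bound from strictly increasing tops. -/
lemma length_le_of_tops {n m : ℕ} {l : List (ℕ × ℕ)}
    (hp : l.Pairwise (fun p q : ℕ × ℕ => p.1 < q.1 ∧ p.2 < q.2))
    (hmem : ∀ p ∈ l, m ≤ p.1 ∧ p.1 < n) : l.length ≤ n - m := by
  classical
  have hlt : (l.map Prod.fst).Pairwise (· < ·) := by
    rw [List.pairwise_map]; exact hp.imp (fun hr => hr.1)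
  have hnd : (l.map Prod.fst).Nodup := hlt.nodup
  have hsub : (l.map Prod.fst).toFinset ⊆ Finset.Ico m n := by
    intro x hx
    simp only [List.mem_toFinset, List.mem_map] at hx
    obtain ⟨p, hpmem, rfl⟩ := hx
    simpa [Finset.mem_Ico] using hmem p hpmem
  calc l.length = (l.map Prod.fst).length := by simp
    _ = (l.map Prod.fst).toFinset.card := (List.toFinset_card_of_nodup hnd).symm
    _ ≤ (Finset.Ico m n).card := Finset.card_le_card hsub
    _ = n - m := Nat.card_Ico m n

lemma tops_ge_head {a b : ℕ} {t : List (ℕ × ℕ)}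
    (hp : ((a, b) :: t).Pairwise (fun p q : ℕ × ℕ => p.1 < q.1 ∧ p.2 < q.2)) :
    ∀ p ∈ (a, b) :: t, a ≤ p.1 := by
  rw [List.pairwise_cons] at hp
  intro p hp2
  rcases List.mem_cons.1 hp2 with rfl | h
  · simp
  · exact le_of_lt (hp.1 p h).1

/-- Finiteness of the master set. -/
lemma finite_master (n : ℕ) :
    {l : List (ℕ × ℕ) | l.length ≤ n ∧ ∀ p ∈ l, p.1 < n ∧ p.2 < n}.Finite := by
  classical
  have h := List.finite_length_le (Fin n × Fin n) n
  have hsub : {l : List (ℕ × ℕ) | l.length ≤ n ∧ ∀ p ∈ l, p.1 < n ∧ p.2 < n}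
      ⊆ (fun l : List (Fin n × Fin n) => l.map (fun q => (q.1.1, q.2.1))) ''
        {l | l.length ≤ n} := by
    intro l hl
    refine ⟨l.attach.map (fun p => (⟨p.1.1, (hl.2 p.1 p.2).1⟩, ⟨p.1.2, (hl.2 p.1 p.2).2⟩)),
      by simpa using hl.1, ?_⟩
    simp only [List.map_map, Function.comp_def]
    have : (fun p : {x // x ∈ l} => ((p.1.1 : ℕ), (p.1.2 : ℕ))) = fun p => p.1 := by
      funext p; exact Prod.mk.eta
    rw [this, List.attach_map_subtype_val]
  exact (h.image _).subset hsub

lemma finite_good (n k : ℕ) : {l : List (ℕ × ℕ) | Good n k l}.Finite := by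
  refine (finite_master n).subset ?_
  rintro l ⟨⟨⟨h1, h2, h3, h4⟩, -⟩, -⟩
  exact ⟨h2, fun p hp => ⟨(h3 p hp).1, lt_of_le_of_lt (h3 p hp).2 (h3 p hp).1⟩⟩

/-- The two maps for the `b = 1` case. -/
def F (k : ℕ) : List (ℕ × ℕ) → List (ℕ × ℕ)
  | _ :: (a, b) :: t => if a = k + 1 then (a, b) :: t else (k + 1, 1) :: (a, b) :: t
  | _ => [(k + 1, 1)]

def G (k : ℕ) : List (ℕ × ℕ) → List (ℕ × ℕ)
  | (a, b) :: t => if b = 1 then (k, 1) :: t else (k, 1) :: (a, b) :: t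
  | [] => []

end Stmt4Aux
namespace Stmt4Aux

lemma q_cons_iff {n a b : ℕ} {t : List (ℕ × ℕ)} :
    Q n ((a, b) :: t) ↔ t.length + 1 ≤ n ∧ (0 < b ∧ b ≤ a ∧ a < n) ∧
      (∀ p ∈ t, 0 < p.2 ∧ p.2 ≤ p.1 ∧ p.1 < n) ∧ (∀ p ∈ t, a < p.1 ∧ b < p.2) ∧
      t.Pairwise (fun p q : ℕ × ℕ => p.1 < q.1 ∧ p.2 < q.2) := by
  simp only [Q, List.length_cons, List.forall_mem_cons, List.pairwise_cons]
  tauto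

def g1 : List (ℕ × ℕ) → List (ℕ × ℕ) := List.map (fun p => (p.1 + 1, p.2 + 1))
def f1 : List (ℕ × ℕ) → List (ℕ × ℕ) := List.map (fun p => (p.1 - 1, p.2 - 1))

def S1 (n k : ℕ) : Set (List (ℕ × ℕ)) :=
  {l | Good n k l ∧ l.head?.map Prod.snd = some 1}
def S2 (n k : ℕ) : Set (List (ℕ × ℕ)) :=
  {l | Good n k l ∧ l.head?.map Prod.snd ≠ some 1}

lemma g1_inj : Function.Injective g1 := by
  refine List.map_injective_iff.2 ?_
  rintro ⟨p1, p2⟩ ⟨q1, q2⟩ h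
  simp only [Prod.ext_iff] at h ⊢
  omega

lemma image_g1 {n k : ℕ} (hn : 2 < n) (hk : 2 ≤ k) (hk' : k ≤ n - 2) :
    g1 '' {l | Good (n - 1) (k - 1) l} = S2 n k := by
  ext l
  constructor
  · rintro ⟨m, hm, rfl⟩
    obtain ⟨b, t, rfl⟩ := good_shape hm
    have hq := ((good_cons _ _ _ _ _).1 hm).2
    rw [q_cons_iff] at hq
    obtain ⟨hlen, hent, hmem, hrel, hpw⟩ := hq
    have hcons : g1 ((k - 1, b) :: t) = (k - 1 + 1, b + 1) :: g1 t := rfl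
    rw [hcons]
    have hk1 : k - 1 + 1 = k := by omega
    rw [hk1]
    constructor
    · rw [good_cons, q_cons_iff]
      refine ⟨rfl, by simp [g1]; omega, by omega, ?_, ?_, ?_⟩
      · intro p hp
        simp only [g1, List.mem_map] at hp
        obtain ⟨q, hq2, rfl⟩ := hp
        have := hmem q hq2
        simp; omega
      · intro p hp
        simp only [g1, List.mem_map] at hp
        obtain ⟨q, hq2, rfl⟩ := hp
        have := hrel q hq2
        simp; omega
      · rw [g1, List.pairwise_map]
        exact hpw.imp (fun {p q} hr => by dsimp only; omega)
    · simp; omega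
  · rintro ⟨hg, hb⟩
    obtain ⟨b, t, rfl⟩ := good_shape hg
    have hq := ((good_cons _ _ _ _ _).1 hg).2
    have hq' := hq
    rw [q_cons_iff] at hq'
    obtain ⟨hlen, hent, hmem, hrel, hpw⟩ := hq'
    have hb2 : 2 ≤ b := by
      simp only [List.head?_cons, Option.map_some] at hb
      have : b ≠ 1 := fun h => hb (by simp [h])
      omega
    have hlenall : ((k, b) :: t).length ≤ n - k := by
      refine length_le_of_tops hq.2.2 ?_
      intro p hp
      exact ⟨tops_ge_head hq.2.2 p hp, (hq.2.1 p hp).2.2⟩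
    refine ⟨f1 ((k, b) :: t), ?_, ?_⟩
    · show Good (n - 1) (k - 1) _
      have hcons : f1 ((k, b) :: t) = (k - 1, b - 1) :: f1 t := rfl
      rw [hcons, good_cons, q_cons_iff]
      simp only [List.length_cons] at hlenall
      refine ⟨rfl, by simp [f1]; omega, by omega, ?_, ?_, ?_⟩
      · intro p hp
        simp only [f1, List.mem_map] at hp
        obtain ⟨q, hq2, rfl⟩ := hp
        have h1 := hmem q hq2
        have h2 := hrel q hq2
        simp; omega
      · intro p hp
        simp only [f1, List.mem_map] at hp
        obtain ⟨q, hq2, rfl⟩ := hp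
        have h1 := hmem q hq2
        have h2 := hrel q hq2
        simp; omega
      · rw [f1, List.pairwise_map]
        refine hpw.imp_of_mem (fun {p q} hp hq2 hr => ?_)
        have h1 := hmem p hp
        have h2 := hrel p hp
        have h3 := hmem q hq2
        simp; omega
    · show g1 (f1 _) = _
      rw [g1, f1, List.map_map]
      refine (List.map_congr_left ?_).trans (List.map_id _)
      intro p hp
      have h1 : 0 < p.2 ∧ p.2 ≤ p.1 := by
        rcases List.mem_cons.1 hp with rfl | hp'
        · exact ⟨hent.1, hent.2.1⟩
        · exact ⟨(hmem p hp').1, (hmem p hp').2.1⟩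
      have h2 : 0 < p.1 := lt_of_lt_of_le h1.1 h1.2
      show ((p.1 - 1) + 1, (p.2 - 1) + 1) = id p
      have e1 : p.1 - 1 + 1 = p.1 := by omega
      have e2 : p.2 - 1 + 1 = p.2 := by omega
      rw [e1, e2, id]

end Stmt4Aux
namespace Stmt4Aux

lemma F_single (k : ℕ) (p : ℕ × ℕ) : F k [p] = [(k + 1, 1)] := rfl

lemma F_cons_cons (k a b : ℕ) (p : ℕ × ℕ) (t : List (ℕ × ℕ)) :
    F k (p :: (a, b) :: t) =
      if a = k + 1 then (a, b) :: t else (k + 1, 1) :: (a, b) :: t := rfl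

lemma G_cons (k a b : ℕ) (t : List (ℕ × ℕ)) :
    G k ((a, b) :: t) = if b = 1 then (k, 1) :: t else (k, 1) :: (a, b) :: t := rfl

lemma mem_S1_shape {n k : ℕ} {l : List (ℕ × ℕ)} (hl : l ∈ S1 n k) :
    ∃ t, l = (k, 1) :: t ∧ Q n ((k, 1) :: t) := by
  obtain ⟨hg, hb⟩ := hl
  obtain ⟨b, t, rfl⟩ := good_shape hg
  have hb1 : b = 1 := by simpa using hb
  subst hb1
  exact ⟨t, rfl, ((good_cons _ _ _ _ _).1 hg).2⟩

lemma GF {n k : ℕ} {l : List (ℕ × ℕ)} (hl : l ∈ S1 n k) : G k (F k l) = l := by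
  obtain ⟨t, rfl, hq⟩ := mem_S1_shape hl
  rw [q_cons_iff] at hq
  obtain ⟨hlen, hent, hmem, hrel, hpw⟩ := hq
  cases t with
  | nil => rfl
  | cons p t' =>
      obtain ⟨a, b2⟩ := p
      rw [F_cons_cons]
      by_cases ha : a = k + 1
      · rw [if_pos ha, G_cons]
        have hb2 : ¬ b2 = 1 := by
          have := (hrel (a, b2) (by simp)).2
          omega
        rw [if_neg hb2]
      · rw [if_neg ha, G_cons, if_pos rfl]

lemma image_F {n k : ℕ} (hn : 2 < n) (hk : 2 ≤ k) (hk' : k ≤ n - 2) :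
    F k '' S1 n k = {l : List (ℕ × ℕ) | Good n (k + 1) l} := by
  ext l
  constructor
  · rintro ⟨m, hm, rfl⟩
    obtain ⟨t, rfl, hq⟩ := mem_S1_shape hm
    rw [q_cons_iff] at hq
    obtain ⟨hlen, hent, hmem, hrel, hpw⟩ := hq
    cases t with
    | nil =>
        show Good n (k + 1) (F k [(k, 1)])
        rw [F_single, good_cons, q_cons_iff]
        refine ⟨rfl, by simp; omega, by omega, by simp, by simp, by simp⟩
    | cons p t' =>
        obtain ⟨a, b2⟩ := p
        show Good n (k + 1) (F k _)
        rw [F_cons_cons]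
        have hab := hrel (a, b2) (by simp)
        rw [List.forall_mem_cons] at hmem hrel
        rw [List.pairwise_cons] at hpw
        by_cases ha : a = k + 1
        · rw [if_pos ha, good_cons, q_cons_iff]
          subst ha
          refine ⟨rfl, by simp only [List.length_cons] at hlen ⊢; omega,
            ⟨hmem.1.1, hmem.1.2.1, hmem.1.2.2⟩, hmem.2, hpw.1, hpw.2⟩
        · rw [if_neg ha, good_cons, q_cons_iff]
          have hage : ∀ p ∈ (a, b2) :: t', a ≤ p.1 :=
            tops_ge_head (List.pairwise_cons.2 hpw)
          refine ⟨rfl, by simpa using hlen, by omega,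
            List.forall_mem_cons.2 ⟨hmem.1, hmem.2⟩, ?_, List.pairwise_cons.2 hpw⟩
          intro p hp
          have h1 := hage p hp
          rcases List.mem_cons.1 hp with rfl | hp'
          · exact ⟨by omega, hab.2⟩
          · exact ⟨by omega, (hrel.2 p hp').2⟩
  · intro hgm
    simp only [Set.mem_setOf_eq] at hgm
    obtain ⟨b, t, rfl⟩ := good_shape hgm
    have hq := ((good_cons _ _ _ _ _).1 hgm).2
    have hq' := hq
    rw [q_cons_iff] at hq'
    obtain ⟨hlen, hent, hmem, hrel, hpw⟩ := hq'
    refine ⟨G k ((k + 1, b) :: t), ?_, ?_⟩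
    · rw [G_cons]
      by_cases hb : b = 1
      · rw [if_pos hb]
        refine ⟨?_, by simp⟩
        rw [good_cons, q_cons_iff]
        refine ⟨rfl, hlen, by omega, hmem, ?_, hpw⟩
        intro p hp
        have := hrel p hp
        omega
      · rw [if_neg hb]
        have hlenall : ((k + 1, b) :: t).length ≤ n - (k + 1) := by
          refine length_le_of_tops hq.2.2 ?_
          intro p hp
          exact ⟨tops_ge_head hq.2.2 p hp, (hq.2.1 p hp).2.2⟩
        refine ⟨?_, by simp⟩
        rw [good_cons, q_cons_iff]
        simp only [List.length_cons] at hlenall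
        refine ⟨rfl, by simp only [List.length_cons]; omega, by omega,
          List.forall_mem_cons.2 ⟨⟨by omega, by omega, by omega⟩, hmem⟩, ?_, hq.2.2⟩
        refine List.forall_mem_cons.2 ⟨⟨by omega, by omega⟩, ?_⟩
        intro p hp
        have := hrel p hp
        omega
    · rw [G_cons]
      by_cases hb : b = 1
      · rw [if_pos hb]
        subst hb
        cases t with
        | nil => rfl
        | cons p t' =>
            obtain ⟨a2, c2⟩ := p
            rw [F_cons_cons, if_neg (by have := (hrel (a2, c2) (by simp)).1; omega)]
      · rw [if_neg hb, F_cons_cons, if_pos rfl]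

end Stmt4Aux

/-- for `n > 2` and `k ∈ [2, n-2]`,
`θ_k^{(n)} = θ_{k-1}^{(n-1)} + θ_{k+1}^{(n)}`. -/
theorem stmt4 (n k : ℕ) (hn : 2 < n) (hk : 2 ≤ k) (hk' : k ≤ n - 2) :
    theta n k = theta (n - 1) (k - 1) + theta n (k + 1) := by
  classical
  have hθ : ∀ (n' k' : ℕ),
      theta n' k' = Set.ncard {l : List (ℕ × ℕ) | Stmt4Aux.Good n' k' l} := by
    intro n' k'
    rw [← Nat.card_coe_set_eq]
    rfl
  have hsplit : {l : List (ℕ × ℕ) | Stmt4Aux.Good n k l} =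
      Stmt4Aux.S1 n k ∪ Stmt4Aux.S2 n k := by
    ext l
    simp only [Stmt4Aux.S1, Stmt4Aux.S2, Set.mem_setOf_eq, Set.mem_union]
    tauto
  have hdisj : Disjoint (Stmt4Aux.S1 n k) (Stmt4Aux.S2 n k) := by
    rw [Set.disjoint_left]
    rintro l ⟨-, h1⟩ ⟨-, h2⟩
    exact h2 h1
  have hfin1 : (Stmt4Aux.S1 n k).Finite :=
    (Stmt4Aux.finite_good n k).subset (fun l hl => hl.1)
  have hfin2 : (Stmt4Aux.S2 n k).Finite :=
    (Stmt4Aux.finite_good n k).subset (fun l hl => hl.1)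
  have e2 : (Stmt4Aux.S2 n k).ncard =
      {l : List (ℕ × ℕ) | Stmt4Aux.Good (n - 1) (k - 1) l}.ncard := by
    rw [← Stmt4Aux.image_g1 hn hk hk',
      Set.ncard_image_of_injOn (Stmt4Aux.g1_inj.injOn)]
  have e1 : (Stmt4Aux.S1 n k).ncard =
      {l : List (ℕ × ℕ) | Stmt4Aux.Good n (k + 1) l}.ncard := by
    rw [← Stmt4Aux.image_F hn hk hk']
    refine (Set.ncard_image_of_injOn ?_).symm
    intro l1 h1 l2 h2 heq
    rw [← Stmt4Aux.GF h1, ← Stmt4Aux.GF h2, heq]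
  rw [hθ n k, hθ (n - 1) (k - 1), hθ n (k + 1), hsplit,
    Set.ncard_union_eq hdisj hfin1 hfin2]
  omega
end

section
/- For n > 3 and k ∈ [2, n-2], θ_k^{(n)} = 1 + Σ_{j=k-1}^{n-2} θ_j^{(n-1)}. -/
open Finset

/-!
Since repeated bottom entries must vanish, a positive indexing matrix is a list of columns
`(a, b)` with `0 < b ≤ a < n`, strictly increasing in both rows. Split the matrices on `n + 1`
points whose first column is `(k + 1, b)` according to `b`. If `b ≥ 2`, every entry is at least
`2`, and subtracting `1` from all entries is a bijection onto the matrices on `n` points counted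
by `θ_k^{(n)}`. If `b = 1`, dropping the first column and subtracting `1` from the rest leaves
either the empty matrix or a positive matrix on `n` points whose first top entry `j` lies in
`(k, n)`. Hence `θ_{k+1}^{(n+1)} = θ_k^{(n)} + 1 + Σ_{k < j < n} θ_j^{(n)}`.
-/

lemma Set.Finite.setOf_length_le_forall_mem {α : Type*} {s : Set α} (hs : s.Finite) (n : ℕ) :
    {l : List α | l.length ≤ n ∧ ∀ x ∈ l, x ∈ s}.Finite := by
  have := hs.to_subtype
  refine ((List.finite_length_le s n).image (List.map Subtype.val)).subset ?_
  rintro l ⟨hl, hls⟩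
  exact ⟨l.attachWith _ hls, by simpa using hl, List.attachWith_map_subtype_val hls⟩

lemma List.Nodup.length_le_of_forall_lt {l : List ℕ} {n : ℕ}
    (hl : l.Nodup) (hn : ∀ a ∈ l, a < n) : l.length ≤ n := by
  classical
  calc l.length = l.toFinset.card := (List.toFinset_card_of_nodup hl).symm
    _ ≤ (Finset.range n).card :=
      card_le_card fun a ha => Finset.mem_range.2 (hn a (List.mem_toFinset.1 ha))
    _ = n := Finset.card_range n

def IsStrictMatrix (n : ℕ) (l : List (ℕ × ℕ)) : Prop :=
  (∀ p ∈ l, p.1 < n ∧ p.2 ≤ p.1) ∧ l.Pairwise fun p q => p.1 < q.1 ∧ p.2 < q.2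

namespace IsStrictMatrix

variable {n : ℕ} {l : List (ℕ × ℕ)}

@[simp]
lemma nil : IsStrictMatrix n [] := by simp [IsStrictMatrix]

lemma cons_iff {p : ℕ × ℕ} :
    IsStrictMatrix n (p :: l) ↔ (p.1 < n ∧ p.2 ≤ p.1) ∧
      (∀ q ∈ l, p.1 < q.1 ∧ p.2 < q.2) ∧ IsStrictMatrix n l := by
  simp only [IsStrictMatrix, List.forall_mem_cons, List.pairwise_cons]
  tauto

lemma head_le {a b : ℕ} {t : List (ℕ × ℕ)}
    (h : IsStrictMatrix n ((a, b) :: t)) : ∀ p ∈ (a, b) :: t, a ≤ p.1 ∧ b ≤ p.2 := by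
  rw [cons_iff] at h
  simp only [List.forall_mem_cons, le_refl, true_and]
  exact fun p hp => ⟨(h.2.1 p hp).1.le, (h.2.1 p hp).2.le⟩

lemma length_le (h : IsStrictMatrix n l) : l.length ≤ n := by
  simpa using List.Nodup.length_le_of_forall_lt
    ((List.pairwise_map.2 (h.2.imp And.left)).imp ne_of_lt)
    (List.forall_mem_map.2 fun p hp => (h.1 p hp).1)

lemma finite_setOf (n : ℕ) : {l | IsStrictMatrix n l}.Finite := by
  refine (((Set.finite_Iio n).prod (Set.finite_Iio n)).setOf_length_le_forall_mem n).subset ?_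
  intro l hl
  exact ⟨hl.length_le, fun p hp => ⟨(hl.1 p hp).1, (hl.1 p hp).2.trans_lt (hl.1 p hp).1⟩⟩

end IsStrictMatrix

lemma isPositiveIndexingMatrix_iff {n : ℕ} {l : List (ℕ × ℕ)} :
    IsPositiveIndexingMatrix n l ↔ l ≠ [] ∧ IsStrictMatrix n l ∧ ∀ p ∈ l, 0 < p.2 := by
  constructor
  · rintro ⟨⟨hne, -, hbound, hpw⟩, hpos⟩
    refine ⟨List.ne_nil_of_length_pos hne, ⟨hbound, hpw.imp_of_mem ?_⟩, fun p hp => (hpos p hp).2⟩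
    rintro p q hp - ⟨h1, h2, h3⟩
    exact ⟨h1, lt_of_le_of_ne h2 fun h => (hpos p hp).2.ne' (h3 h)⟩
  · rintro ⟨hne, hl, hpos⟩
    refine ⟨⟨List.length_pos_of_ne_nil hne, hl.length_le, hl.1, ?_⟩, ?_⟩
    · exact hl.2.imp fun h => ⟨h.1, h.2.le, fun h' => absurd h' h.2.ne⟩
    · exact fun p hp => ⟨(hpos p hp).trans_le (hl.1 p hp).2, hpos p hp⟩

def shiftEntries (l : List (ℕ × ℕ)) : List (ℕ × ℕ) := l.map (Prod.map (· + 1) (· + 1))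

@[simp]
lemma shiftEntries_nil : shiftEntries [] = [] := rfl

@[simp]
lemma shiftEntries_cons (p : ℕ × ℕ) (l : List (ℕ × ℕ)) :
    shiftEntries (p :: l) = (p.1 + 1, p.2 + 1) :: shiftEntries l := rfl

@[simp]
lemma forall_mem_shiftEntries {P : ℕ × ℕ → Prop} {l : List (ℕ × ℕ)} :
    (∀ p ∈ shiftEntries l, P p) ↔ ∀ p ∈ l, P (p.1 + 1, p.2 + 1) :=
  List.forall_mem_map

lemma shiftEntries_injective : Function.Injective shiftEntries :=
  List.map_injective_iff.2 <| Prod.map_injective.2 ⟨add_left_injective 1, add_left_injective 1⟩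

lemma exists_eq_shiftEntries {l : List (ℕ × ℕ)} (h : ∀ p ∈ l, 0 < p.1 ∧ 0 < p.2) :
    ∃ l', l = shiftEntries l' := by
  refine ⟨l.map (Prod.map (· - 1) (· - 1)), ?_⟩
  rw [shiftEntries, List.map_map]
  conv_lhs => rw [← List.map_id l]
  refine List.map_congr_left fun p hp => ?_
  have := h p hp
  ext <;> simp <;> omega

@[simp]
lemma isStrictMatrix_shiftEntries {n : ℕ} {l : List (ℕ × ℕ)} :
    IsStrictMatrix (n + 1) (shiftEntries l) ↔ IsStrictMatrix n l := by
  rw [IsStrictMatrix, IsStrictMatrix, forall_mem_shiftEntries, shiftEntries, List.pairwise_map]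
  simp

lemma head?_map_fst_eq_some_iff {l : List (ℕ × ℕ)} {k : ℕ} :
    l.head?.map Prod.fst = some k ↔ ∃ b t, l = (k, b) :: t := by
  cases l with
  | nil => simp
  | cons p t =>
    simp only [List.head?_cons, Option.map_some, Option.some.injEq, List.cons.injEq]
    constructor
    · rintro rfl
      exact ⟨p.2, t, rfl, rfl⟩
    · rintro ⟨b, t', rfl, -⟩
      rfl

abbrev PosMatrixFrom (n k : ℕ) : Type :=
  {l : List (ℕ × ℕ) // IsStrictMatrix n l ∧ (∀ p ∈ l, 0 < p.2) ∧ l.head?.map Prod.fst = some k}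

abbrev PosMatrixAbove (n k : ℕ) : Type :=
  {l : List (ℕ × ℕ) // IsStrictMatrix n l ∧ ∀ p ∈ l, k < p.1 ∧ 0 < p.2}

instance (n k : ℕ) : Finite (PosMatrixFrom n k) :=
  ((IsStrictMatrix.finite_setOf n).subset fun _ h => h.1).to_subtype

instance (n k : ℕ) : Finite (PosMatrixAbove n k) :=
  ((IsStrictMatrix.finite_setOf n).subset fun _ h => h.1).to_subtype

lemma theta_eq_card (n k : ℕ) : theta n k = Nat.card (PosMatrixFrom n k) := by
  refine Nat.card_congr (Equiv.subtypeEquivRight fun l => ?_)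
  simp only [isPositiveIndexingMatrix_iff, and_assoc]
  refine and_iff_right_of_imp fun h => ?_
  obtain ⟨b, t, rfl⟩ := head?_map_fst_eq_some_iff.1 h.2.2
  exact List.cons_ne_nil _ _

def posMatrixAboveOfOption (n k : ℕ) :
    Option (Σ j : Ioo k n, PosMatrixFrom n j) → PosMatrixAbove n k
  | none => ⟨[], by simp⟩
  | some ⟨j, l⟩ => ⟨l.1, l.2.1, fun p hp => by
      obtain ⟨b, t, hl⟩ := head?_map_fst_eq_some_iff.1 l.2.2.2
      have hjp := (hl ▸ l.2.1).head_le p (hl ▸ hp)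
      exact ⟨(mem_Ioo.1 j.2).1.trans_le hjp.1, l.2.2.1 p hp⟩⟩

lemma posMatrixAboveOfOption_bijective (n k : ℕ) :
    Function.Bijective (posMatrixAboveOfOption n k) := by
  constructor
  · rintro (_ | ⟨j, l, hl⟩) (_ | ⟨j', l', hl'⟩) h <;>
      simp only [posMatrixAboveOfOption, Subtype.mk.injEq] at h
    · rfl
    · obtain ⟨b, t, rfl⟩ := head?_map_fst_eq_some_iff.1 hl'.2.2
      simp at h
    · obtain ⟨b, t, rfl⟩ := head?_map_fst_eq_some_iff.1 hl.2.2
      simp at h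
    · subst h
      obtain rfl : j = j' := Subtype.ext (Option.some_injective _ (hl.2.2.symm.trans hl'.2.2))
      rfl
  · rintro ⟨_ | ⟨⟨a, b⟩, t⟩, hl, hpos⟩
    · exact ⟨none, rfl⟩
    · refine ⟨some ⟨⟨a, mem_Ioo.2 ⟨(hpos _ List.mem_cons_self).1, (hl.1 _ List.mem_cons_self).1⟩⟩,
        ⟨(a, b) :: t, hl, fun p hp => (hpos p hp).2, rfl⟩⟩, rfl⟩

lemma card_posMatrixAbove (n k : ℕ) :
    Nat.card (PosMatrixAbove n k) = 1 + ∑ j ∈ Ioo k n, theta n j := by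
  rw [← Nat.card_eq_of_bijective _ (posMatrixAboveOfOption_bijective n k), Finite.card_option,
    Nat.card_sigma, sum_coe_sort (Ioo k n) fun j => Nat.card (PosMatrixFrom n j), add_comm]
  simp only [theta_eq_card]

def posMatrixFromSuccOfSum {n k : ℕ} (hk : k < n) :
    PosMatrixFrom n k ⊕ PosMatrixAbove n k → PosMatrixFrom (n + 1) (k + 1)
  | .inl l => ⟨shiftEntries l.1, isStrictMatrix_shiftEntries.2 l.2.1,
      forall_mem_shiftEntries.2 fun _ _ => Nat.succ_pos _, by
        obtain ⟨b, t, hl⟩ := head?_map_fst_eq_some_iff.1 l.2.2.2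
        simp [hl]⟩
  | .inr t => ⟨(k + 1, 1) :: shiftEntries t.1, by
      rw [IsStrictMatrix.cons_iff, isStrictMatrix_shiftEntries, forall_mem_shiftEntries]
      exact ⟨⟨by omega, by omega⟩, fun p hp => by have := t.2.2 p hp; omega, t.2.1⟩,
      List.forall_mem_cons.2 ⟨Nat.one_pos, forall_mem_shiftEntries.2 fun _ _ => Nat.succ_pos _⟩, rfl⟩

lemma posMatrixFromSuccOfSum_bijective {n k : ℕ} (hk : k < n) :
    Function.Bijective (posMatrixFromSuccOfSum hk) := by
  constructor
  · rintro (⟨l, hl⟩ | ⟨t, ht⟩) (⟨l', hl'⟩ | ⟨t', ht'⟩) h <;>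
      simp only [posMatrixFromSuccOfSum, Subtype.mk.injEq, List.cons.injEq] at h
    · exact congrArg _ (Subtype.ext (shiftEntries_injective h))
    · obtain ⟨b, t, rfl⟩ := head?_map_fst_eq_some_iff.1 hl.2.2
      have := hl.2.1 _ List.mem_cons_self
      simp only [shiftEntries_cons, List.cons.injEq, Prod.mk.injEq] at h
      omega
    · obtain ⟨b, t, rfl⟩ := head?_map_fst_eq_some_iff.1 hl'.2.2
      have := hl'.2.1 _ List.mem_cons_self
      simp only [shiftEntries_cons, List.cons.injEq, Prod.mk.injEq] at h
      omega
    · exact congrArg _ (Subtype.ext (shiftEntries_injective h.2))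
  · rintro ⟨l, hl, hpos, hk⟩
    obtain ⟨b, t, rfl⟩ := head?_map_fst_eq_some_iff.1 hk
    rcases Nat.lt_or_ge 1 b with hb | hb
    · have hle := hl.head_le
      obtain ⟨l', hl'⟩ := exists_eq_shiftEntries fun p hp =>
        ⟨by have := hle p hp; omega, by have := hle p hp; omega⟩
      rw [hl'] at hl hle
      refine ⟨.inl ⟨l', isStrictMatrix_shiftEntries.1 hl, fun p hp => ?_, ?_⟩, Subtype.ext hl'.symm⟩
      · have := forall_mem_shiftEntries.1 hle p hp
        omega
      · rcases l' with _ | ⟨q, l''⟩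
        · simp at hl'
        · simp only [shiftEntries_cons, List.cons.injEq, Prod.mk.injEq] at hl'
          simp only [List.head?_cons, Option.map_some, Option.some.injEq]
          omega
    · obtain rfl : b = 1 := by have := hpos _ List.mem_cons_self; omega
      rw [IsStrictMatrix.cons_iff] at hl
      obtain ⟨-, habove, ht⟩ := hl
      obtain ⟨t', rfl⟩ := exists_eq_shiftEntries fun p hp =>
        ⟨by have := habove p hp; omega, by have := habove p hp; omega⟩
      refine ⟨.inr ⟨t', isStrictMatrix_shiftEntries.1 ht, fun p hp => ?_⟩, rfl⟩
      have := forall_mem_shiftEntries.1 habove p hp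
      omega

lemma card_posMatrixFrom_succ {n k : ℕ} (hk : k < n) :
    Nat.card (PosMatrixFrom (n + 1) (k + 1)) =
      Nat.card (PosMatrixFrom n k) + Nat.card (PosMatrixAbove n k) := by
  rw [← Nat.card_eq_of_bijective _ (posMatrixFromSuccOfSum_bijective hk), Nat.card_sum]

theorem theta_succ_succ {n k : ℕ} (hk : k < n) :
    theta (n + 1) (k + 1) = 1 + ∑ j ∈ Ico k n, theta n j := by
  rw [theta_eq_card, card_posMatrixFrom_succ hk, card_posMatrixAbove, ← theta_eq_card,
    sum_eq_sum_Ico_succ_bot hk, Ico_add_one_left_eq_Ioo]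
  ring

theorem stmt5_general (n k : ℕ) (hk : 2 ≤ k) (hk' : k ≤ n - 2) :
    theta n k = 1 + ∑ j ∈ Finset.Icc (k - 1) (n - 2), theta (n - 1) j := by
  obtain ⟨m, rfl⟩ : ∃ m, n = m + 1 := ⟨n - 1, by omega⟩
  obtain ⟨i, rfl⟩ : ∃ i, k = i + 1 := ⟨k - 1, by omega⟩
  rw [theta_succ_succ (by omega), Nat.add_sub_cancel, Nat.add_sub_cancel]
  congr 2
  ext j
  simp only [mem_Ico, mem_Icc]
  omega

/-- for `n > 3` and `k ∈ [2, n-2]`,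
`θ_k^{(n)} = 1 + Σ_{j=k-1}^{n-2} θ_j^{(n-1)}`. -/
theorem stmt5 (n k : ℕ) (hn : 3 < n) (hk : 2 ≤ k) (hk' : k ≤ n - 2) :
    theta n k = 1 + ∑ j ∈ Finset.Icc (k - 1) (n - 2), theta (n - 1) j :=
  stmt5_general n k hk hk'
end

section
/- Ω_0^{(n)} = C_n, the n-th Catalan number, for all n ≥ 1. -/
open Finset

/-!
A blob-rank-zero indexing matrix is a nonempty list of columns `(a, b)` with `0 < b ≤ a < n`,
strictly increasing in both entries. Such lists are exactly the valley lists of Dyck paths of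
semilength `n`: a valley after `a` up-steps and `b` down-steps sits at `(a, b)`, and the path
`Uⁿ Dⁿ` without valleys corresponds to the degenerate matrix. Rebuilding a path from its valleys
and reading the valleys off a path are mutually inverse, so `Ω₀⁽ⁿ⁾` counts Dyck paths of
semilength `n`, which number `Cₙ`.
-/

section ValleyLists

open List DyckStep

/-- Valleys `(a, b)` of the rest of a path to `(n, n)`, taken from the lattice point `(x, y)`.
A valley is followed by an up-step, so the path continues from `(a + 1, b)`. -/
def IsValleyList (n : ℕ) : ℕ → ℕ → List (ℕ × ℕ) → Prop
  | _, _, [] => True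
  | x, y, (a, b) :: r => x ≤ a ∧ y < b ∧ b ≤ a ∧ a < n ∧ IsValleyList n (a + 1) b r

def valleyPath (n : ℕ) : ℕ → ℕ → List (ℕ × ℕ) → List DyckStep
  | x, y, [] => replicate (n - x) U ++ replicate (n - y) D
  | x, y, (a, b) :: r => replicate (a - x) U ++ replicate (b - y) D ++ U :: valleyPath n (a + 1) b r

def valleys : ℕ → ℕ → List DyckStep → List (ℕ × ℕ)
  | _, _, [] => []
  | x, y, U :: w => valleys (x + 1) y w
  | _, _, [D] => []
  | x, y, D :: U :: w => (x, y + 1) :: valleys (x + 1) (y + 1) w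
  | x, y, D :: D :: w => valleys x (y + 1) (D :: w)

def IsBallotFrom (x y : ℕ) (w : List DyckStep) : Prop :=
  ∀ i, y + (w.take i).count D ≤ x + (w.take i).count U

variable {n x y : ℕ}

theorem count_U_cons_D (w : List DyckStep) : (D :: w).count U = w.count U :=
  count_cons_of_ne (by decide)

theorem count_D_cons_U (w : List DyckStep) : (U :: w).count D = w.count D :=
  count_cons_of_ne (by decide)

theorem IsValleyList.mono {l : List (ℕ × ℕ)} {x' y' : ℕ} (h : IsValleyList n x y l)
    (hx : x' ≤ x) (hy : y' ≤ y) : IsValleyList n x' y' l := by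
  match l, h with
  | [], _ => trivial
  | (_, _) :: _, ⟨ha, hb, h⟩ => exact ⟨hx.trans ha, hy.trans_lt hb, h⟩

theorem isValleyList_iff {l : List (ℕ × ℕ)} :
    IsValleyList n x y l ↔ (∀ p ∈ l, x ≤ p.1 ∧ y < p.2 ∧ p.2 ≤ p.1 ∧ p.1 < n) ∧
      l.Pairwise (fun p q => p.1 < q.1 ∧ p.2 < q.2) := by
  induction l generalizing x y with
  | nil => simp [IsValleyList]
  | cons p r ih =>
    obtain ⟨a, b⟩ := p
    simp only [IsValleyList, ih, List.forall_mem_cons, List.pairwise_cons]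
    constructor
    · rintro ⟨hxa, hyb, hba, han, hr, hpw⟩
      exact ⟨⟨⟨hxa, hyb, hba, han⟩, fun p hp => by grind⟩, fun p hp => by grind, hpw⟩
    · rintro ⟨⟨⟨hxa, hyb, hba, han⟩, hr⟩, hlt, hpw⟩
      exact ⟨hxa, hyb, hba, han, fun p hp => by grind, hpw⟩

theorem count_U_valleyPath {l : List (ℕ × ℕ)} (h : IsValleyList n x y l) :
    (valleyPath n x y l).count U = n - x := by
  induction l generalizing x y with
  | nil => simp [valleyPath, count_replicate]
  | cons p r ih =>
    obtain ⟨a, b⟩ := p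
    obtain ⟨hxa, -, -, han, hr⟩ := h
    simp only [valleyPath, count_append, count_replicate, count_cons_self, ih hr, beq_iff_eq,
      reduceCtorEq, ↓reduceIte]
    omega

theorem count_D_valleyPath {l : List (ℕ × ℕ)} (h : IsValleyList n x y l) :
    (valleyPath n x y l).count D = n - y := by
  induction l generalizing x y with
  | nil => simp [valleyPath, count_replicate]
  | cons p r ih =>
    obtain ⟨a, b⟩ := p
    obtain ⟨-, hyb, hba, han, hr⟩ := h
    simp only [valleyPath, count_append, count_replicate, count_D_cons_U, ih hr, beq_iff_eq,
      reduceCtorEq, ↓reduceIte]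
    omega

theorem isBallotFrom_nil : IsBallotFrom x y [] ↔ y ≤ x := by
  simp [IsBallotFrom]

theorem isBallotFrom_cons_U {w : List DyckStep} :
    IsBallotFrom x y (U :: w) ↔ y ≤ x ∧ IsBallotFrom (x + 1) y w := by
  refine ⟨fun h => ⟨by simpa using h 0, fun i => ?_⟩, ?_⟩
  · have := h (i + 1)
    rw [take_succ_cons, count_cons_self, count_D_cons_U] at this
    omega
  · rintro ⟨hyx, h⟩ (_ | i)
    · simpa using hyx
    · rw [take_succ_cons, count_cons_self, count_D_cons_U]
      have := h i
      omega

theorem isBallotFrom_cons_D {w : List DyckStep} :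
    IsBallotFrom x y (D :: w) ↔ IsBallotFrom x (y + 1) w := by
  refine ⟨fun h i => ?_, fun h => ?_⟩
  · have := h (i + 1)
    rw [take_succ_cons, count_cons_self, count_U_cons_D] at this
    omega
  · rintro (_ | i)
    · have := h 0
      simp only [take_zero, count_nil] at this ⊢
      omega
    · rw [take_succ_cons, count_cons_self, count_U_cons_D]
      have := h i
      omega

theorem isBallotFrom_replicate_U_append {w : List DyckStep} (k : ℕ) (hyx : y ≤ x)
    (h : IsBallotFrom (x + k) y w) : IsBallotFrom x y (replicate k U ++ w) := by
  induction k generalizing x with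
  | zero => simpa using h
  | succ k ih =>
    rw [replicate_succ, cons_append, isBallotFrom_cons_U]
    exact ⟨hyx, ih (by omega) (by rwa [add_right_comm, add_assoc])⟩

theorem isBallotFrom_replicate_D_append {w : List DyckStep} (k : ℕ)
    (h : IsBallotFrom x (y + k) w) : IsBallotFrom x y (replicate k D ++ w) := by
  induction k generalizing y with
  | zero => simpa using h
  | succ k ih =>
    rw [replicate_succ, cons_append, isBallotFrom_cons_D]
    exact ih (by rwa [add_right_comm, add_assoc])

theorem isBallotFrom_valleyPath {l : List (ℕ × ℕ)} (h : IsValleyList n x y l) (hyx : y ≤ x) :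
    IsBallotFrom x y (valleyPath n x y l) := by
  induction l generalizing x y with
  | nil =>
    rw [valleyPath, ← append_nil (replicate (n - y) D)]
    refine isBallotFrom_replicate_U_append _ hyx (isBallotFrom_replicate_D_append _ ?_)
    rw [isBallotFrom_nil]
    omega
  | cons p r ih =>
    obtain ⟨a, b⟩ := p
    obtain ⟨hxa, hyb, hba, han, hr⟩ := h
    rw [valleyPath, append_assoc]
    refine isBallotFrom_replicate_U_append _ hyx (isBallotFrom_replicate_D_append _ ?_)
    rw [Nat.add_sub_cancel' hxa, Nat.add_sub_cancel' hyb.le, isBallotFrom_cons_U]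
    exact ⟨hba, ih hr (by omega)⟩

theorem valleys_replicate_U_append (k : ℕ) (w : List DyckStep) :
    valleys x y (replicate k U ++ w) = valleys (x + k) y w := by
  induction k generalizing x with
  | zero => rfl
  | succ k ih => rw [replicate_succ, cons_append, valleys, ih, add_right_comm, add_assoc]

theorem valleys_replicate_D (k : ℕ) : valleys x y (replicate k D) = [] := by
  induction k generalizing y with
  | zero => rfl
  | succ k ih =>
    cases k with
    | zero => rfl
    | succ k => rw [replicate_succ, replicate_succ, valleys, ← replicate_succ, ih]

theorem valleys_replicate_D_append_U_cons {k : ℕ} (hk : 0 < k) (w : List DyckStep) :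
    valleys x y (replicate k D ++ U :: w) = (x, y + k) :: valleys (x + 1) (y + k) w := by
  induction k generalizing y with
  | zero => omega
  | succ k ih =>
    cases k with
    | zero => rfl
    | succ k =>
      rw [replicate_succ, replicate_succ, cons_append, cons_append, valleys, ← cons_append,
        ← replicate_succ, ih (by omega), add_right_comm, add_assoc]

theorem valleys_valleyPath {l : List (ℕ × ℕ)} (h : IsValleyList n x y l) :
    valleys x y (valleyPath n x y l) = l := by
  induction l generalizing x y with
  | nil => rw [valleyPath, valleys_replicate_U_append, valleys_replicate_D]
  | cons p r ih =>
    obtain ⟨a, b⟩ := p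
    obtain ⟨hxa, hyb, -, -, hr⟩ := h
    rw [valleyPath, append_assoc, valleys_replicate_U_append,
      valleys_replicate_D_append_U_cons (by omega), Nat.add_sub_cancel' hxa,
      Nat.add_sub_cancel' hyb.le, ih hr]

theorem mem_valleys {w : List DyckStep} {p : ℕ × ℕ} (hp : p ∈ valleys x y w) :
    x ≤ p.1 ∧ y < p.2 := by
  fun_induction valleys x y w with
  | case1 => simp at hp
  | case2 x y w ih => have := ih hp; omega
  | case3 => simp at hp
  | case4 x y w ih =>
    rcases mem_cons.mp hp with rfl | hp
    · simp
    · have := ih hp; omega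
  | case5 x y w ih => have := ih hp; omega

theorem fst_of_mem_head?_valleys_D_cons {w : List DyckStep} {p : ℕ × ℕ}
    (hp : p ∈ (valleys x y (D :: w)).head?) : p.1 = x := by
  induction w generalizing y with
  | nil => simp [valleys] at hp
  | cons s w ih =>
    cases s with
    | U =>
      simp only [valleys, head?_cons, Option.mem_some_iff] at hp
      rw [← hp]
    | D => exact ih hp

theorem count_U_eq_zero_of_valleys_D_cons_eq_nil {w : List DyckStep}
    (h : valleys x y (D :: w) = []) : w.count U = 0 := by
  induction w generalizing y with
  | nil => rfl
  | cons s w ih =>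
    cases s with
    | U => simp [valleys] at h
    | D => simpa [count_U_cons_D] using ih h

theorem valleyPath_eq_U_cons {l : List (ℕ × ℕ)} (hxn : x < n)
    (hl : ∀ p ∈ l.head?, x < p.1) : valleyPath n x y l = U :: valleyPath n (x + 1) y l := by
  match l with
  | [] => rw [valleyPath, valleyPath, show n - x = n - (x + 1) + 1 by omega, replicate_succ,
      cons_append]
  | (a, b) :: r =>
    have hxa : x < a := hl (a, b) rfl
    rw [valleyPath, valleyPath, show a - x = a - (x + 1) + 1 by omega, replicate_succ,
      cons_append, cons_append]

theorem valleyPath_eq_D_cons {l : List (ℕ × ℕ)} (hl : ∀ p ∈ l.head?, p.1 = x ∧ y < p.2)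
    (hnil : l = [] → x = n ∧ y < n) : valleyPath n x y l = D :: valleyPath n x (y + 1) l := by
  match l with
  | [] =>
    obtain ⟨rfl, hyn⟩ := hnil rfl
    rw [valleyPath, valleyPath, show x - y = x - (y + 1) + 1 by omega, replicate_succ]
    simp
  | (a, b) :: r =>
    obtain ⟨rfl, hyb⟩ := hl (a, b) rfl
    rw [valleyPath, valleyPath, show b - y = b - (y + 1) + 1 by omega, replicate_succ]
    simp

theorem valleyPath_valleys {w : List DyckStep} (hU : x + w.count U = n)
    (hD : y + w.count D = n) : valleyPath n x y (valleys x y w) = w := by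
  fun_induction valleys x y w generalizing n with
  | case1 x y =>
    simp only [count_nil, add_zero] at hU hD
    simp [valleyPath, hU, hD]
  | case2 x y w ih =>
    simp only [count_cons_self, count_D_cons_U] at hU hD
    rw [valleyPath_eq_U_cons (by omega) fun p hp => (mem_valleys (mem_of_mem_head? hp)).1,
      ih (by omega) hD]
  | case3 x y =>
    simp only [count_cons_self, count_U_cons_D, count_nil] at hU hD
    simp [valleyPath, show n - x = 0 by omega, show n - y = 1 by omega]
  | case4 x y w ih =>
    simp only [count_cons_self, count_U_cons_D, count_D_cons_U] at hU hD
    rw [valleyPath, ih (by omega) (by omega)]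
    simp
  | case5 x y w ih =>
    rw [count_U_cons_D] at hU
    rw [count_cons_self] at hD
    refine (valleyPath_eq_D_cons (fun p hp => ⟨fst_of_mem_head?_valleys_D_cons hp, ?_⟩)
      fun h => ⟨?_, ?_⟩).trans (congrArg _ (ih hU (by omega)))
    · have := (mem_valleys (mem_of_mem_head? hp)).2
      omega
    · rwa [count_U_cons_D, count_U_eq_zero_of_valleys_D_cons_eq_nil h] at hU
    · omega

theorem isValleyList_valleys {w : List DyckStep} (hU : x + w.count U = n)
    (hD : y + w.count D = n) (hw : IsBallotFrom x y w) : IsValleyList n x y (valleys x y w) := by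
  fun_induction valleys x y w generalizing n with
  | case1 | case3 => trivial
  | case2 x y w ih =>
    simp only [count_cons_self, count_D_cons_U] at hU hD
    exact (ih (by omega) hD (isBallotFrom_cons_U.mp hw).2).mono (Nat.le_succ x) le_rfl
  | case4 x y w ih =>
    simp only [count_cons_self, count_U_cons_D, count_D_cons_U] at hU hD
    rw [isBallotFrom_cons_D, isBallotFrom_cons_U] at hw
    exact ⟨le_rfl, Nat.lt_succ_self y, hw.1, by omega, ih (by omega) (by omega) hw.2⟩
  | case5 x y w ih =>
    rw [count_U_cons_D] at hU
    rw [count_cons_self] at hD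
    exact (ih hU (by omega) (isBallotFrom_cons_D.mp hw)).mono le_rfl (Nat.le_succ y)

def valleyListEquivDyckWord (n : ℕ) :
    {l : List (ℕ × ℕ) // IsValleyList n 0 0 l} ≃ {p : DyckWord // p.semilength = n} where
  toFun l :=
    ⟨{ toList := valleyPath n 0 0 l.1
       count_U_eq_count_D := by rw [count_U_valleyPath l.2, count_D_valleyPath l.2]
       count_D_le_count_U := by simpa [IsBallotFrom] using isBallotFrom_valleyPath l.2 le_rfl },
     count_U_valleyPath l.2⟩
  invFun p :=
    ⟨valleys 0 0 p.1.toList, isValleyList_valleys ((zero_add _).trans p.2)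
      ((zero_add _).trans (p.1.count_U_eq_count_D ▸ p.2))
      (by simpa [IsBallotFrom] using p.1.count_D_le_count_U)⟩
  left_inv l := Subtype.ext (valleys_valleyPath l.2)
  right_inv p := Subtype.ext <| DyckWord.ext <| valleyPath_valleys ((zero_add _).trans p.2)
    ((zero_add _).trans (p.1.count_U_eq_count_D ▸ p.2))

theorem blobRank_eq_zero_iff {l : List (ℕ × ℕ)} :
    blobRank l = 0 ↔ ∀ p ∈ l, p.1 ≠ 0 ∧ p.2 ≠ 0 := by
  simp [blobRank, countP_eq_zero]

theorem length_le_of_pairwise_fst_lt {l : List (ℕ × ℕ)}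
    (hpw : l.Pairwise (fun p q => p.1 < q.1)) (hn : ∀ p ∈ l, p.1 < n) : l.length ≤ n := by
  have hnd : (l.map Prod.fst).Nodup := pairwise_map.mpr (hpw.imp Nat.ne_of_lt)
  have hsub : l.map Prod.fst ⊆ List.range n := fun a ha => by
    obtain ⟨p, hp, rfl⟩ := mem_map.mp ha
    exact List.mem_range.mpr (hn p hp)
  simpa using (subperm_of_subset hnd hsub).length_le

theorem isIndexingMatrix_and_blobRank_eq_zero_iff {l : List (ℕ × ℕ)} :
    IsIndexingMatrix n l ∧ blobRank l = 0 ↔ l ≠ [] ∧ IsValleyList n 0 0 l := by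
  rw [blobRank_eq_zero_iff, isValleyList_iff]
  constructor
  · rintro ⟨⟨hlen, -, hmem, hpw⟩, hpos⟩
    refine ⟨ne_nil_of_length_pos hlen, fun p hp => ?_, hpw.imp_of_mem fun hp _ h => ?_⟩
    · have := hmem p hp
      have := hpos p hp
      omega
    · have := hpos _ hp
      exact ⟨h.1, lt_of_le_of_ne h.2.1 fun he => this.2 (h.2.2 he)⟩
  · rintro ⟨hne, hmem, hpw⟩
    refine ⟨⟨length_pos_of_ne_nil hne, length_le_of_pairwise_fst_lt (hpw.imp And.left)
      fun p hp => (hmem p hp).2.2.2, fun p hp => ⟨(hmem p hp).2.2.2, (hmem p hp).2.2.1⟩,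
      hpw.imp fun h => ⟨h.1, h.2.le, fun he => absurd he h.2.ne⟩⟩, fun p hp => ?_⟩
    have := hmem p hp
    omega

end ValleyLists

theorem stmt6_general (n : ℕ) : Omega n 0 = catalan n := by
  have hfin : {l : List (ℕ × ℕ) | IsValleyList n 0 0 l}.Finite :=
    Set.finite_coe_iff.mp (Finite.of_equiv _ (valleyListEquivDyckWord n).symm)
  have hzero :
      {l | IsIndexingMatrix n l ∧ blobRank l = 0} = {l | IsValleyList n 0 0 l} \ {[]} := by
    ext l
    simp [isIndexingMatrix_and_blobRank_eq_zero_iff, and_comm]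
  calc Omega n 0 = ({l | IsValleyList n 0 0 l} \ {[]}).ncard + 1 := by
        rw [Omega, if_pos rfl, ← hzero, ← Nat.card_coe_set_eq]; rfl
    _ = {l | IsValleyList n 0 0 l}.ncard := Set.ncard_sdiff_singleton_add_one trivial hfin
    _ = Nat.card {p : DyckWord // p.semilength = n} :=
        (Nat.card_coe_set_eq _).symm.trans (Nat.card_congr (valleyListEquivDyckWord n))
    _ = catalan n := by
        rw [Nat.card_eq_fintype_card, DyckWord.card_dyckWord_semilength_eq_catalan]

/-- `Ω_0^{(n)} = C_n` for all `n ≥ 1`. -/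
theorem stmt6 (n : ℕ) (hn : 1 ≤ n) : Omega n 0 = catalan n :=
  stmt6_general n
end

section
/- For r ∈ [1, n-1], Ω_r^{(n)} = Σ_{i=r-1}^{n-1} C(i, r-1) · (1 + Σ_{j=i+1}^{n-1} θ_j^{(n)}). -/
open Finset

/-!
In an indexing matrix every entry of a column is at most its top entry, so a column contains a `0`
iff its bottom entry is `0`; as the bottom row is weakly increasing, these blob columns form an
initial segment `(a₁, 0), …, (a_r, 0)` with `a₁ < ⋯ < a_r`. Fix `i = a_r`. The earlier tops are
an `(r - 1)`-subset of `{0, …, i - 1}`, and the remaining columns are either absent or form a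
positive indexing matrix whose `(1,1)`-entry `j` exceeds `i`. These two choices are independent,
giving `C(i, r-1) · (1 + Σ_{j>i} θ_j)` matrices for each `i`.
-/

theorem Nat.card_eq_sum_card_fiberwise {X : Type*} [Finite X] {s : Finset ℕ} (g : X → ℕ)
    (hg : ∀ x, g x ∈ s) : Nat.card X = ∑ i ∈ s, Nat.card {x : X // g x = i} := by
  classical
  cases nonempty_fintype X
  rw [Nat.card_eq_fintype_card, ← Finset.card_univ,
    Finset.card_eq_sum_card_fiberwise (fun x _ => hg x)]
  refine Finset.sum_congr rfl fun i _ => ?_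
  rw [Nat.card_eq_fintype_card, Fintype.card_subtype]

theorem List.le_of_mem_of_getLast?_eq {α : Type*} [Preorder α] {w : List α} {a i : α}
    (hw : w.SortedLE) (hi : w.getLast? = some i) (ha : a ∈ w) : a ≤ i := by
  obtain ⟨ys, rfl⟩ := List.getLast?_eq_some_iff.1 hi
  rcases List.mem_append.1 ha with ha | ha
  · exact (List.pairwise_append.1 hw.pairwise).2.2 a ha i (List.mem_singleton_self i)
  · exact (List.mem_singleton.1 ha).le

theorem List.SortedLT.length_le_of_forall_lt {w : List ℕ} {n : ℕ} (hw : w.SortedLT)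
    (hn : ∀ a ∈ w, a < n) : w.length ≤ n := by
  simpa using (List.subperm_of_subset hw.nodup fun a ha => List.mem_range.2 (hn a ha)).length_le

def sortedLTGetLastEquiv (k i : ℕ) :
    {w : List ℕ // w.SortedLT ∧ w.length = k + 1 ∧ w.getLast? = some i} ≃
      {s // s ∈ powersetCard k (range i)} where
  toFun w := ⟨w.1.dropLast.toFinset, by
    obtain ⟨w, hw, hlen, hi⟩ := w
    obtain ⟨ys, rfl⟩ := List.getLast?_eq_some_iff.1 hi
    have hys := List.pairwise_append.1 hw.pairwise
    rw [List.dropLast_concat, mem_powersetCard, List.toFinset_card_of_nodup hys.1.nodup]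
    refine ⟨fun a ha => mem_range.2 (hys.2.2 a (List.mem_toFinset.1 ha) i (by simp)), ?_⟩
    simpa using hlen⟩
  invFun s := ⟨s.1.sort ++ [i], by
    obtain ⟨s, hs⟩ := s
    rw [mem_powersetCard] at hs
    refine ⟨List.Pairwise.sortedLT (List.pairwise_append.2 ⟨(sortedLT_sort s).pairwise,
      List.pairwise_singleton _ _, ?_⟩), by simp [hs.2], List.getLast?_concat⟩
    intro a ha b hb
    rw [List.mem_singleton.1 hb]
    exact mem_range.1 (hs.1 ((mem_sort _).1 ha))⟩
  left_inv w := by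
    obtain ⟨w, hw, hlen, hi⟩ := w
    obtain ⟨ys, rfl⟩ := List.getLast?_eq_some_iff.1 hi
    have hys := (List.pairwise_append.1 hw.pairwise).1
    ext1
    simp only [List.dropLast_concat]
    rw [(List.toFinset_sort _ hys.nodup).2 (hys.imp le_of_lt)]
  right_inv s := by simp

theorem card_sortedLT_getLast?_eq (k i : ℕ) :
    Nat.card {w : List ℕ // w.SortedLT ∧ w.length = k + 1 ∧ w.getLast? = some i} =
      i.choose k := by
  rw [Nat.card_congr (sortedLTGetLastEquiv k i), Nat.card_eq_finsetCard, card_powersetCard,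
    card_range]

def ColumnLT (p q : ℕ × ℕ) : Prop := p.1 < q.1 ∧ p.2 ≤ q.2 ∧ (p.2 = q.2 → p.2 = 0)

theorem columnLT_mk_zero_iff {a : ℕ} {q : ℕ × ℕ} : ColumnLT (a, 0) q ↔ a < q.1 := by
  simp [ColumnLT]

namespace IsIndexingMatrix

variable {n : ℕ} {l : List (ℕ × ℕ)}

theorem pairwise (hl : IsIndexingMatrix n l) : l.Pairwise ColumnLT := hl.2.2.2

theorem of_pairwise (hne : l ≠ []) (hmem : ∀ p ∈ l, p.1 < n ∧ p.2 ≤ p.1)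
    (hl : l.Pairwise ColumnLT) : IsIndexingMatrix n l := by
  refine ⟨List.length_pos_iff.2 hne, ?_, hmem, hl⟩
  simpa using (List.pairwise_map.2 (hl.imp And.left)).sortedLT.length_le_of_forall_lt
    (by simpa using fun p hp => (hmem p hp).1)

theorem sublist (hl : IsIndexingMatrix n l) {l' : List (ℕ × ℕ)} (h : l'.Sublist l)
    (hne : l' ≠ []) : IsIndexingMatrix n l' :=
  of_pairwise hne (fun p hp => hl.2.2.1 p (h.subset hp)) (hl.pairwise.sublist h)

end IsIndexingMatrix

theorem finite_setOf_isIndexingMatrix (n : ℕ) : {l | IsIndexingMatrix n l}.Finite := by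
  refine ((List.finite_length_le (Fin n × Fin n) n).image
    (List.map fun p => ((p.1 : ℕ), (p.2 : ℕ)))).subset fun l hl => ?_
  have hbound : ∀ p ∈ l, p.1 < n ∧ p.2 < n := fun p hp =>
    have h := hl.2.2.1 p hp
    ⟨h.1, h.2.trans_lt h.1⟩
  refine ⟨l.pmap (fun p hp => (⟨p.1, hp.1⟩, ⟨p.2, hp.2⟩)) hbound, by simpa using hl.2.1, ?_⟩
  simp [List.map_pmap]

def bottomIsZero (p : ℕ × ℕ) : Bool := p.2 == 0

def zeroColumns (w : List ℕ) : List (ℕ × ℕ) := w.map (·, 0)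

def blobTops (l : List (ℕ × ℕ)) : List ℕ := (l.takeWhile bottomIsZero).map Prod.fst

def lastBlobTop (l : List (ℕ × ℕ)) : ℕ := (blobTops l).getLast?.getD 0

theorem getLast?_blobTops {l : List (ℕ × ℕ)} (h : blobTops l ≠ []) :
    (blobTops l).getLast? = some (lastBlobTop l) := by
  rw [lastBlobTop, List.getLast?_eq_some_getLast h, Option.getD_some]

theorem zeroColumns_blobTops_append_dropWhile (l : List (ℕ × ℕ)) :
    zeroColumns (blobTops l) ++ l.dropWhile bottomIsZero = l := by
  conv_rhs => rw [← List.takeWhile_append_dropWhile (p := bottomIsZero) (l := l)]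
  congr 1
  rw [zeroColumns, blobTops, List.map_map]
  conv_rhs => rw [← List.map_id (l.takeWhile bottomIsZero)]
  refine List.map_congr_left fun p hp => ?_
  have : p.2 = 0 := by simpa [bottomIsZero] using List.mem_takeWhile_imp hp
  exact Prod.ext rfl this.symm

section ZeroColumnsAppend

variable {w : List ℕ} {t : List (ℕ × ℕ)}

theorem takeWhile_zeroColumns_append (ht : ∀ p ∈ t, 0 < p.1 ∧ 0 < p.2) :
    (zeroColumns w ++ t).takeWhile bottomIsZero = zeroColumns w := by
  rw [List.takeWhile_append_of_pos (by simp [zeroColumns, bottomIsZero])]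
  cases t with
  | nil => simp
  | cons p t => simp [bottomIsZero, (ht p List.mem_cons_self).2.ne']

theorem dropWhile_zeroColumns_append (ht : ∀ p ∈ t, 0 < p.1 ∧ 0 < p.2) :
    (zeroColumns w ++ t).dropWhile bottomIsZero = t := by
  rw [List.dropWhile_append_of_pos (by simp [zeroColumns, bottomIsZero])]
  cases t with
  | nil => simp
  | cons p t => simp [bottomIsZero, (ht p List.mem_cons_self).2.ne']

theorem blobTops_zeroColumns_append (ht : ∀ p ∈ t, 0 < p.1 ∧ 0 < p.2) :
    blobTops (zeroColumns w ++ t) = w := by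
  rw [blobTops, takeWhile_zeroColumns_append ht, zeroColumns, List.map_map]
  exact List.map_id w

theorem blobRank_zeroColumns_append (ht : ∀ p ∈ t, 0 < p.1 ∧ 0 < p.2) :
    blobRank (zeroColumns w ++ t) = w.length := by
  rw [blobRank, List.countP_append, List.countP_eq_length.2 (by simp [zeroColumns]),
    List.countP_eq_zero.2 fun p hp => ?_, zeroColumns, List.length_map, add_zero]
  have := ht p hp
  simp only [Bool.or_eq_true, beq_iff_eq, not_or]
  omega

theorem pairwise_zeroColumns_append_iff :
    (zeroColumns w ++ t).Pairwise ColumnLT ↔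
      w.SortedLT ∧ t.Pairwise ColumnLT ∧ ∀ a ∈ w, ∀ p ∈ t, a < p.1 := by
  simp [zeroColumns, List.pairwise_append, List.pairwise_map, columnLT_mk_zero_iff,
    List.sortedLT_iff_pairwise]

end ZeroColumnsAppend

-- The admissible columns after a last blob column `(i, 0)`.
def IsTailAfter (n i : ℕ) (t : List (ℕ × ℕ)) : Prop :=
  t = [] ∨ IsPositiveIndexingMatrix n t ∧ ∀ p ∈ t, i < p.1

theorem IsTailAfter.pos {n i : ℕ} {t : List (ℕ × ℕ)} (ht : IsTailAfter n i t) :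
    ∀ p ∈ t, 0 < p.1 ∧ 0 < p.2 := by
  rcases ht with rfl | ht
  · simp
  · exact ht.1.2

namespace IsIndexingMatrix

variable {n i : ℕ} {l : List (ℕ × ℕ)}

theorem lastBlobTop_lt (hl : IsIndexingMatrix n l) : lastBlobTop l < n := by
  rw [lastBlobTop]
  cases h : (blobTops l).getLast? with
  | none => exact Nat.lt_of_lt_of_le hl.1 hl.2.1
  | some a =>
    obtain ⟨p, hp, rfl⟩ := List.mem_map.1 (List.mem_of_getLast? h)
    exact (hl.2.2.1 p ((List.takeWhile_sublist _).subset hp)).1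

theorem pos_of_mem_dropWhile (hl : IsIndexingMatrix n l) {p : ℕ × ℕ}
    (hp : p ∈ l.dropWhile bottomIsZero) : 0 < p.1 ∧ 0 < p.2 := by
  obtain ⟨q, rest, hq⟩ := List.exists_cons_of_ne_nil (List.ne_nil_of_mem hp)
  have hq2 : 0 < q.2 := by
    have := List.head_dropWhile_not bottomIsZero (l := l) (by simp [hq])
    simp only [hq, List.head_cons, bottomIsZero, beq_eq_false_iff_ne] at this
    omega
  have hpw := hl.pairwise.sublist (List.dropWhile_sublist bottomIsZero)
  rw [hq] at hp hpw
  have hp2 : 0 < p.2 := by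
    rcases List.mem_cons.1 hp with rfl | hp
    · exact hq2
    · exact hq2.trans_le (List.rel_of_pairwise_cons hpw hp).2.1
  exact ⟨hp2.trans_le (hl.2.2.1 p ((List.dropWhile_sublist _).subset (hq ▸ hp))).2, hp2⟩

theorem blobRank_eq_length_blobTops (hl : IsIndexingMatrix n l) :
    blobRank l = (blobTops l).length := by
  conv_lhs => rw [← zeroColumns_blobTops_append_dropWhile l]
  exact blobRank_zeroColumns_append fun p hp => hl.pos_of_mem_dropWhile hp

theorem pairwise_blobTops_dropWhile (hl : IsIndexingMatrix n l) :
    (blobTops l).SortedLT ∧ (l.dropWhile bottomIsZero).Pairwise ColumnLT ∧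
      ∀ a ∈ blobTops l, ∀ p ∈ l.dropWhile bottomIsZero, a < p.1 := by
  rw [← pairwise_zeroColumns_append_iff, zeroColumns_blobTops_append_dropWhile]
  exact hl.pairwise

theorem isTailAfter_dropWhile (hl : IsIndexingMatrix n l) (hi : i ∈ blobTops l) :
    IsTailAfter n i (l.dropWhile bottomIsZero) := by
  by_cases ht : l.dropWhile bottomIsZero = []
  · exact Or.inl ht
  · exact Or.inr ⟨⟨hl.sublist (List.dropWhile_sublist _) ht,
      fun p hp => hl.pos_of_mem_dropWhile hp⟩, hl.pairwise_blobTops_dropWhile.2.2 i hi⟩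

theorem forall_lt_fst_iff {q : ℕ × ℕ} {t : List (ℕ × ℕ)} (hl : IsIndexingMatrix n (q :: t)) :
    (∀ p ∈ q :: t, i < p.1) ↔ i < q.1 := by
  refine ⟨fun h => h q List.mem_cons_self, fun hq p hp => ?_⟩
  rcases List.mem_cons.1 hp with rfl | hp
  · exact hq
  · exact hq.trans (List.rel_of_pairwise_cons hl.pairwise hp).1

end IsIndexingMatrix

section Fiber

variable {n i : ℕ}

theorem isIndexingMatrix_zeroColumns_append {w : List ℕ} {t : List (ℕ × ℕ)} (hw : w.SortedLT)
    (hlast : w.getLast? = some i) (hi : i < n) (ht : IsTailAfter n i t) :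
    IsIndexingMatrix n (zeroColumns w ++ t) := by
  have hwi : ∀ a ∈ w, a ≤ i := fun a ha => List.le_of_mem_of_getLast?_eq hw.sortedLE hlast ha
  have hw0 : w ≠ [] := List.ne_nil_of_mem (List.mem_of_getLast? hlast)
  rcases ht with rfl | ⟨⟨ht, -⟩, hit⟩
  · refine .of_pairwise (by simpa [zeroColumns] using hw0) ?_
      (pairwise_zeroColumns_append_iff.2 ⟨hw, by simp, by simp⟩)
    simpa [zeroColumns] using fun a ha => (hwi a ha).trans_lt hi
  · refine .of_pairwise (by simp [List.length_pos_iff.1 ht.1]) ?_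
      (pairwise_zeroColumns_append_iff.2
        ⟨hw, ht.pairwise, fun a ha p hp => (hwi a ha).trans_lt (hit p hp)⟩)
    simp only [zeroColumns, List.mem_append, List.mem_map]
    rintro p (⟨a, ha, rfl⟩ | hp)
    · exact ⟨(hwi a ha).trans_lt hi, Nat.zero_le a⟩
    · exact ht.2.2.1 p hp

def blobFiberEquiv {r : ℕ} (hr : r ≠ 0) (hi : i < n) :
    {l // (IsIndexingMatrix n l ∧ blobRank l = r) ∧ lastBlobTop l = i} ≃
      {w : List ℕ // w.SortedLT ∧ w.length = r ∧ w.getLast? = some i} ×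
        {t // IsTailAfter n i t} where
  toFun l :=
    have hlen : (blobTops l.1).length = r :=
      l.2.1.1.blobRank_eq_length_blobTops.symm.trans l.2.1.2
    have hlast : (blobTops l.1).getLast? = some i :=
      (getLast?_blobTops (List.ne_nil_of_length_pos (by omega))).trans (congrArg some l.2.2)
    (⟨blobTops l.1, l.2.1.1.pairwise_blobTops_dropWhile.1, hlen, hlast⟩,
      ⟨l.1.dropWhile bottomIsZero, l.2.1.1.isTailAfter_dropWhile (List.mem_of_getLast? hlast)⟩)
  invFun x :=
    ⟨zeroColumns x.1.1 ++ x.2.1,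
      ⟨isIndexingMatrix_zeroColumns_append x.1.2.1 x.1.2.2.2 hi x.2.2,
        (blobRank_zeroColumns_append x.2.2.pos).trans x.1.2.2.1⟩,
      by rw [lastBlobTop, blobTops_zeroColumns_append x.2.2.pos, x.1.2.2.2, Option.getD_some]⟩
  left_inv l := Subtype.ext (zeroColumns_blobTops_append_dropWhile l.1)
  right_inv x := Prod.ext (Subtype.ext (blobTops_zeroColumns_append x.2.2.pos))
    (Subtype.ext (dropWhile_zeroColumns_append x.2.2.pos))

theorem card_isPositiveIndexingMatrix_forall_lt_fst (n i : ℕ) :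
    Nat.card {t // IsPositiveIndexingMatrix n t ∧ ∀ p ∈ t, i < p.1} =
      ∑ j ∈ Icc (i + 1) (n - 1), theta n j := by
  have : Finite {t // IsPositiveIndexingMatrix n t ∧ ∀ p ∈ t, i < p.1} :=
    ((finite_setOf_isIndexingMatrix n).subset fun t ht => ht.1.1).to_subtype
  have hhead : ∀ t : {t // IsPositiveIndexingMatrix n t ∧ ∀ p ∈ t, i < p.1},
      (t.1.headD (0, 0)).1 ∈ Icc (i + 1) (n - 1) := by
    rintro ⟨_ | ⟨q, t⟩, ht, hit⟩
    · simp [IsPositiveIndexingMatrix, IsIndexingMatrix] at ht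
    · have := (ht.1.2.2.1 q List.mem_cons_self).1
      have := hit q List.mem_cons_self
      simp only [List.headD_cons, mem_Icc]
      omega
  rw [Nat.card_eq_sum_card_fiberwise _ hhead]
  refine sum_congr rfl fun j hj => ?_
  rw [theta, Nat.card_congr (Equiv.subtypeSubtypeEquivSubtypeInter
    (fun t => IsPositiveIndexingMatrix n t ∧ ∀ p ∈ t, i < p.1) (fun t => (t.headD (0, 0)).1 = j))]
  refine Nat.card_congr (Equiv.subtypeEquivRight fun t => ?_)
  rcases t with _ | ⟨q, t⟩
  · simp [IsPositiveIndexingMatrix, IsIndexingMatrix]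
  · have hij : i < j := by simp only [mem_Icc] at hj; omega
    simp only [List.headD_cons, List.head?_cons, Option.map_some, Option.some.injEq]
    constructor
    · rintro ⟨⟨ht, -⟩, rfl⟩
      exact ⟨ht, rfl⟩
    · rintro ⟨ht, rfl⟩
      exact ⟨⟨ht, ht.1.forall_lt_fst_iff.2 hij⟩, rfl⟩

theorem card_isTailAfter (n i : ℕ) :
    Nat.card {t // IsTailAfter n i t} = 1 + ∑ j ∈ Icc (i + 1) (n - 1), theta n j := by
  have hfin : {t | IsPositiveIndexingMatrix n t ∧ ∀ p ∈ t, i < p.1}.Finite :=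
    (finite_setOf_isIndexingMatrix n).subset fun t ht => ht.1.1
  have hnil : [] ∉ {t | IsPositiveIndexingMatrix n t ∧ ∀ p ∈ t, i < p.1} := by
    simp [IsPositiveIndexingMatrix, IsIndexingMatrix]
  change Nat.card ↥(insert ([] : List (ℕ × ℕ))
    {t | IsPositiveIndexingMatrix n t ∧ ∀ p ∈ t, i < p.1} : Set (List (ℕ × ℕ))) = _
  rw [Nat.card_coe_set_eq, Set.ncard_insert_of_notMem hnil hfin, ← Nat.card_coe_set_eq,
    add_comm]
  exact congrArg (1 + ·) (card_isPositiveIndexingMatrix_forall_lt_fst n i)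

theorem card_blobFiber {k : ℕ} (hi : i < n) :
    Nat.card {l // (IsIndexingMatrix n l ∧ blobRank l = k + 1) ∧ lastBlobTop l = i} =
      i.choose k * (1 + ∑ j ∈ Icc (i + 1) (n - 1), theta n j) := by
  rw [Nat.card_congr (blobFiberEquiv k.succ_ne_zero hi), Nat.card_prod,
    card_sortedLT_getLast?_eq, card_isTailAfter]

end Fiber

/-- for `r ∈ [1, n-1]`,
`Ω_r^{(n)} = Σ_{i=r-1}^{n-1} C(i, r-1) ⬝ (1 + Σ_{j=i+1}^{n-1} θ_j^{(n)})`. -/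
theorem stmt8 (n r : ℕ) (h1 : 1 ≤ r) (h2 : r ≤ n - 1) :
    Omega n r =
      ∑ i ∈ Finset.Icc (r - 1) (n - 1),
        i.choose (r - 1) * (1 + ∑ j ∈ Finset.Icc (i + 1) (n - 1), theta n j) := by
  obtain ⟨k, rfl⟩ : ∃ k, r = k + 1 := ⟨r - 1, by omega⟩
  have : Finite {l // IsIndexingMatrix n l ∧ blobRank l = k + 1} :=
    ((finite_setOf_isIndexingMatrix n).subset fun l hl => hl.1).to_subtype
  have hIcc : Icc k (n - 1) ⊆ range n := fun i hi =>
    mem_range.2 (by simp only [mem_Icc] at hi; omega)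
  have hvanish : ∀ i ∈ range n, i ∉ Icc k (n - 1) →
      i.choose k * (1 + ∑ j ∈ Icc (i + 1) (n - 1), theta n j) = 0 := fun i hi hi' => by
    simp only [mem_Icc, mem_range] at hi hi'
    rw [Nat.choose_eq_zero_of_lt (by omega), zero_mul]
  rw [Omega, if_neg k.succ_ne_zero, add_zero, Nat.add_sub_cancel, sum_subset hIcc hvanish,
    Nat.card_eq_sum_card_fiberwise (fun l => lastBlobTop l.1)
      fun l => mem_range.2 l.2.1.lastBlobTop_lt]
  refine sum_congr rfl fun i hi => ?_
  rw [← card_blobFiber (mem_range.1 hi)]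
  exact Nat.card_congr (Equiv.subtypeSubtypeEquivSubtypeInter
    (fun l => IsIndexingMatrix n l ∧ blobRank l = k + 1) (fun l => lastBlobTop l = i))
end

section
/- For k ∈ [1,n], the number χ_k^{(n)} of Temperley–Lieb diagrams on n points with exactly k arcs exposed to the left side satisfies χ_k^{(n)} = Σ_{(i_1,...,i_k)} C_{i_1}···C_{i_k}, where the sum is over all tuples (i_1,...,i_k) of nonnegative integers with i_1 + ... + i_k = n - k, and C_m denotes the m-th Catalan number. -/
/-!
Read a diagram as a non-crossing fixed-point-free involution `f` of its `2n` boundary points.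
The points strictly inside the arc through the first point `0` are matched among themselves, so
that arc ends at an odd point `2i + 1`, and cutting along it is a bijection between diagrams on
`n + 1` points and pairs of diagrams on `i` and on `n - i` points. The arc through `0` is exposed,
the arcs under it are not, and the other exposed arcs are those of the second diagram. Hence the
diagrams are counted by the Catalan recursion, and `χ_{k+1}^{(n+1)} = Σ_{i+j=n} C_i χ_k^{(j)}`,
which is also the recursion of the `(k+1)`-fold convolution of the Catalan numbers.
-/

open Finset

theorem Finset.Nat.sum_antidiagonalTuple_succ {M : Type*} [AddCommMonoid M] (k n : ℕ)
    (g : (Fin (k + 1) → ℕ) → M) :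
    ∑ t ∈ Nat.antidiagonalTuple (k + 1) n, g t =
      ∑ p ∈ antidiagonal n, ∑ t ∈ Nat.antidiagonalTuple k p.2, g (Fin.cons p.1 t) := by
  rw [sum_sigma']
  refine sum_bij' (fun t _ => ⟨(t 0, ∑ j : Fin k, t j.succ), Fin.tail t⟩)
    (fun x _ => Fin.cons x.1.1 x.2) ?_ ?_ ?_ ?_ ?_
  all_goals simp only [mem_sigma, HasAntidiagonal.mem_antidiagonal, Nat.mem_antidiagonalTuple]
  · intro t ht
    simp [← ht, Fin.sum_univ_succ, Fin.tail]
  · rintro ⟨⟨a, b⟩, t⟩ ⟨hab, ht⟩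
    simp_all [Fin.sum_cons]
  · simp
  · rintro ⟨⟨a, b⟩, t⟩ ⟨hab, ht⟩
    simp_all
  · simp

theorem Finset.even_card_of_involution_ne {α : Type*} [LinearOrder α] {s : Finset α}
    {f : α → α} (hs : ∀ x ∈ s, f x ∈ s) (hf : ∀ x ∈ s, f (f x) = x) (hne : ∀ x ∈ s, f x ≠ x) :
    Even #s := by
  have hswap : #{x ∈ s | x < f x} = #{x ∈ s | ¬ x < f x} := by
    refine card_nbij' f f ?_ ?_ ?_ ?_ <;>
      simp only [coe_filter, Set.MapsTo, Set.LeftInvOn, Set.mem_ofPred_eq]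
    · intro x ⟨hx, hlt⟩
      exact ⟨hs x hx, by rw [hf x hx]; exact hlt.not_gt⟩
    · intro x ⟨hx, hge⟩
      exact ⟨hs x hx, by rw [hf x hx]; exact lt_of_le_of_ne (not_lt.1 hge) (hne x hx)⟩
    · intro x ⟨hx, _⟩
      exact hf x hx
    · intro x ⟨hx, _⟩
      exact hf x hx
  rw [← card_filter_add_card_filter_not (fun x => x < f x), hswap]
  exact ⟨_, rfl⟩

/-- Non-crossing perfect matchings of `{0, …, 2n-1}`, encoded as involutions of `ℕ` fixing every
`x ≥ 2n` so that they can be cut and glued without `Fin` casts. -/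
@[ext]
structure NCMatching (n : ℕ) where
  f : ℕ → ℕ
  f_lt : ∀ x < 2 * n, f x < 2 * n
  f_of_le : ∀ x, 2 * n ≤ x → f x = x
  f_f : ∀ x, f (f x) = x
  f_ne : ∀ x < 2 * n, f x ≠ x
  noncrossing : ∀ a b, a < b → b < f a → f a < f b → False

namespace NCMatching

variable {n : ℕ}

instance : Finite (NCMatching n) := by
  refine Finite.of_injective (fun m (x : Fin (2 * n)) => (⟨m.f x, m.f_lt x x.2⟩ : Fin (2 * n)))
    fun m₁ m₂ h => NCMatching.ext (funext fun x => ?_)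
  by_cases hx : x < 2 * n
  · simpa using congrArg Fin.val (congrFun h ⟨x, hx⟩)
  · rw [m₁.f_of_le x (not_lt.1 hx), m₂.f_of_le x (not_lt.1 hx)]

instance : Unique (NCMatching 0) where
  default :=
    { f := id
      f_lt := fun _ hx => absurd hx (Nat.not_lt_zero _)
      f_of_le := fun _ _ => rfl
      f_f := fun _ => rfl
      f_ne := fun _ hx => absurd hx (Nat.not_lt_zero _)
      noncrossing := fun _ _ hab hb _ => (hab.trans hb).false }
  uniq m := NCMatching.ext (funext fun x => m.f_of_le x (Nat.zero_le x))

section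

variable (m : NCMatching n)

theorem f_lt_iff {x : ℕ} : m.f x < 2 * n ↔ x < 2 * n := by
  refine ⟨fun h => ?_, m.f_lt x⟩
  by_contra hx
  rw [m.f_of_le x (not_lt.1 hx)] at h
  exact hx h

theorem f_injective : Function.Injective m.f :=
  Function.LeftInverse.injective m.f_f

theorem f_eq_two_mul_iff {x : ℕ} : m.f x = 2 * n ↔ x = 2 * n :=
  m.f_injective.eq_iff' (m.f_of_le _ le_rfl)

theorem f_mem_Ioo {a x : ℕ} (hax : a < x) (hxa : x < m.f a) : m.f x ∈ Set.Ioo a (m.f a) := by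
  have h1 : m.f x ≠ a := fun h => by rw [← h, m.f_f] at hxa; exact hxa.false
  have h2 : m.f x ≠ m.f a := fun h => by rw [m.f_injective h] at hax; exact hax.false
  have h3 : ¬ m.f a < m.f x := m.noncrossing a x hax hxa
  have h4 : ¬ m.f x < a := fun h => m.noncrossing (m.f x) a h (by rwa [m.f_f]) (by rwa [m.f_f])
  constructor <;> omega

theorem f_zero_lt_f {x : ℕ} (hx : m.f 0 < x) : m.f 0 < m.f x := by
  have h1 : m.f x ≠ 0 := fun h => by rw [← h, m.f_f] at hx; exact hx.false
  have h2 : m.f x ≠ m.f 0 := fun h => by rw [m.f_injective h] at hx; omega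
  by_contra h3
  have := (m.f_mem_Ioo (a := 0) (x := m.f x) (by omega) (by omega)).2
  rw [m.f_f] at this
  omega

def wrap : NCMatching (n + 1) where
  f x := if x = 0 then 2 * n + 1 else if x = 2 * n + 1 then 0 else m.f (x - 1) + 1
  f_lt x hx := by
    have := m.f_lt_iff (x := x - 1)
    split_ifs <;> omega
  f_of_le x hx := by
    have := m.f_of_le (x - 1) (by omega)
    split_ifs <;> omega
  f_f x := by
    rcases x with _ | x
    · simp
    · by_cases hx : x = 2 * n
      · simp [hx]
      · simp [hx, m.f_eq_two_mul_iff, m.f_f]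
  f_ne x hx := by
    have := m.f_ne (x - 1)
    split_ifs <;> omega
  noncrossing a b hab hb hf := by
    have := m.f_lt_iff (x := a - 1)
    have := m.f_lt_iff (x := b - 1)
    split_ifs at hb hf <;>
      first | omega | exact m.noncrossing (a - 1) (b - 1) (by omega) (by omega) (by omega)

theorem wrap_f_zero : m.wrap.f 0 = 2 * n + 1 := rfl

theorem wrap_f_two_mul_add_one : m.wrap.f (2 * n + 1) = 0 := by simp [wrap]

theorem wrap_f_add_one {x : ℕ} (hx : x < 2 * n) : m.wrap.f (x + 1) = m.f x + 1 := by
  simp [wrap, hx.ne]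

def restrict (s j : ℕ) (hj : s + 2 * j ≤ 2 * n)
    (hs : ∀ x, s ≤ x → x < s + 2 * j → s ≤ m.f x ∧ m.f x < s + 2 * j) : NCMatching j where
  f x := if x < 2 * j then m.f (x + s) - s else x
  f_lt x hx := by
    have := hs (x + s) (by omega) (by omega)
    simp only [if_pos hx]
    omega
  f_of_le x hx := if_neg (by omega)
  f_f x := by
    by_cases hx : x < 2 * j
    · have := hs (x + s) (by omega) (by omega)
      simp [hx, show m.f (x + s) - s < 2 * j by omega, Nat.sub_add_cancel this.1, m.f_f]
    · simp [hx]
  f_ne x hx := by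
    have := hs (x + s) (by omega) (by omega)
    have := m.f_ne (x + s) (by omega)
    simp only [if_pos hx]
    omega
  noncrossing x y hxy hy hf := by
    split_ifs at hy hf with hx hy'
    · have := hs (x + s) (by omega) (by omega)
      have := hs (y + s) (by omega) (by omega)
      exact m.noncrossing (x + s) (y + s) (by omega) (by omega) (by omega)
    all_goals omega

theorem restrict_f {s j : ℕ} {hj hs} {x : ℕ} (hx : x < 2 * j) :
    (m.restrict s j hj hs).f x = m.f (x + s) - s := if_pos hx

def IsExposed (x : ℕ) : Prop := x < m.f x ∧ ∀ c, ¬ (c < x ∧ m.f x < m.f c)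

noncomputable def exposedCount : ℕ := {x | m.IsExposed x}.ncard

variable {m} in
theorem IsExposed.lt_two_mul {x : ℕ} (hx : m.IsExposed x) : x < 2 * n := by
  by_contra h
  have := hx.1
  rw [m.f_of_le x (not_lt.1 h)] at this
  exact this.false

theorem finite_setOf_isExposed : {x | m.IsExposed x}.Finite :=
  (Set.finite_Iio (2 * n)).subset fun _ hx => IsExposed.lt_two_mul hx

theorem setOf_isExposed_wrap : {x | m.wrap.IsExposed x} = {0} := by
  ext x
  simp only [Set.mem_ofPred_eq, Set.mem_singleton_iff]
  refine ⟨fun hx => ?_, fun hx => ⟨by simp [hx, wrap_f_zero], fun c hc => by omega⟩⟩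
  by_contra hx0
  have hlt := hx.lt_two_mul
  obtain ⟨y, rfl⟩ : ∃ y, x = y + 1 := Nat.exists_eq_add_one.2 (Nat.pos_of_ne_zero hx0)
  by_cases hy : y = 2 * n
  · have := hx.1
    rw [hy, wrap_f_two_mul_add_one] at this
    omega
  · apply hx.2 0
    have := m.f_lt y (by omega)
    rw [wrap_f_zero, wrap_f_add_one _ (by omega)]
    omega

theorem exposedCount_wrap : m.wrap.exposedCount = 1 := by
  rw [exposedCount, setOf_isExposed_wrap, Set.ncard_singleton]

end

theorem wrap_injective : Function.Injective (wrap : NCMatching n → NCMatching (n + 1)) := by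
  intro m₁ m₂ h
  ext x
  by_cases hx : x < 2 * n
  · simpa [wrap_f_add_one, hx] using congrArg (fun m => m.f (x + 1)) h
  · rw [m₁.f_of_le x (not_lt.1 hx), m₂.f_of_le x (not_lt.1 hx)]

theorem exposedCount_eq_zero (m : NCMatching 0) : m.exposedCount = 0 := by
  have : {x | m.IsExposed x} = ∅ :=
    Set.eq_empty_of_forall_notMem fun x hx => by have := IsExposed.lt_two_mul hx; omega
  rw [exposedCount, this, Set.ncard_empty]

def append {a b : ℕ} (h : a + b = n) (A : NCMatching a) (B : NCMatching b) : NCMatching n where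
  f x := if x < 2 * a then A.f x else B.f (x - 2 * a) + 2 * a
  f_lt x hx := by
    have := A.f_lt x
    have := B.f_lt (x - 2 * a)
    split_ifs <;> omega
  f_of_le x hx := by
    have := B.f_of_le (x - 2 * a) (by omega)
    split_ifs <;> omega
  f_f x := by
    by_cases hx : x < 2 * a
    · simp [hx, A.f_lt_iff, A.f_f]
    · simp [hx, B.f_f]
      omega
  f_ne x hx := by
    have := A.f_ne x
    have := B.f_ne (x - 2 * a)
    split_ifs <;> omega
  noncrossing x y hxy hy hf := by
    have := A.f_lt_iff (x := x)
    split_ifs at hy hf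
    · exact A.noncrossing x y hxy hy hf
    all_goals first
      | omega
      | exact B.noncrossing (x - 2 * a) (y - 2 * a) (by omega) (by omega) (by omega)

section append

variable {a b : ℕ} (h : a + b = n) (A : NCMatching a) (B : NCMatching b)

theorem append_f_of_lt {x : ℕ} (hx : x < 2 * a) : (append h A B).f x = A.f x := if_pos hx

theorem append_f_add (x : ℕ) : (append h A B).f (x + 2 * a) = B.f x + 2 * a := by
  simp [append]

theorem append_injective {A' : NCMatching a} {B' : NCMatching b}
    (he : append h A B = append h A' B') : A = A' ∧ B = B' := by
  constructor <;> ext x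
  · by_cases hx : x < 2 * a
    · simpa [append_f_of_lt, hx] using congrArg (fun m => m.f x) he
    · rw [A.f_of_le x (not_lt.1 hx), A'.f_of_le x (not_lt.1 hx)]
  · simpa [append_f_add] using congrArg (fun m => m.f (x + 2 * a)) he

theorem isExposed_append_of_lt {x : ℕ} (hx : x < 2 * a) :
    (append h A B).IsExposed x ↔ A.IsExposed x := by
  unfold IsExposed
  rw [append_f_of_lt h A B hx]
  refine and_congr_right fun _ => forall_congr' fun c => ?_
  by_cases hc : c < x
  · rw [append_f_of_lt h A B (hc.trans hx)]
  · simp [hc]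

theorem isExposed_append_add (x : ℕ) :
    (append h A B).IsExposed (x + 2 * a) ↔ B.IsExposed x := by
  unfold IsExposed
  rw [append_f_add]
  refine and_congr (by omega) ⟨fun hx c hc => hx (c + 2 * a) ?_, fun hx c hc => ?_⟩
  · rw [append_f_add]
    omega
  · by_cases hca : c < 2 * a
    · have := A.f_lt c hca
      rw [append_f_of_lt h A B hca] at hc
      omega
    · obtain ⟨d, rfl⟩ : ∃ d, c = d + 2 * a := ⟨c - 2 * a, by omega⟩
      rw [append_f_add] at hc
      exact hx d ⟨by omega, by omega⟩

theorem setOf_isExposed_append :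
    {x | (append h A B).IsExposed x} =
      {x | A.IsExposed x} ∪ (· + 2 * a) '' {x | B.IsExposed x} := by
  ext x
  simp only [Set.mem_union, Set.mem_ofPred_eq, Set.mem_image]
  by_cases hx : x < 2 * a
  · rw [isExposed_append_of_lt h A B hx]
    exact ⟨Or.inl, fun h' => h'.elim id fun ⟨y, _, hy⟩ => by omega⟩
  · obtain ⟨y, rfl⟩ : ∃ y, x = y + 2 * a := ⟨x - 2 * a, by omega⟩
    rw [isExposed_append_add]
    refine ⟨fun hy => Or.inr ⟨y, hy, rfl⟩, fun h' => h'.elim (fun hA => ?_) ?_⟩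
    · exact absurd hA.lt_two_mul hx
    · rintro ⟨z, hz, hzy⟩
      rwa [← Nat.add_right_cancel hzy]

theorem exposedCount_append :
    (append h A B).exposedCount = A.exposedCount + B.exposedCount := by
  have hdisj : Disjoint {x | A.IsExposed x} ((· + 2 * a) '' {x | B.IsExposed x}) := by
    rw [Set.disjoint_right]
    rintro _ ⟨y, _, rfl⟩ hA
    exact (Nat.le_add_left _ y).not_gt hA.lt_two_mul
  rw [exposedCount, setOf_isExposed_append, Set.ncard_union_eq hdisj A.finite_setOf_isExposed
    (B.finite_setOf_isExposed.image _), Set.ncard_image_of_injective _ (add_left_injective _)]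
  rfl

end append

def glue (n : ℕ) (x : Σ p : antidiagonal n, NCMatching p.1.1 × NCMatching p.1.2) :
    NCMatching (n + 1) :=
  append (by have := HasAntidiagonal.mem_antidiagonal.1 x.1.2; omega) x.2.1.wrap x.2.2

theorem glue_f_zero (x : Σ p : antidiagonal n, NCMatching p.1.1 × NCMatching p.1.2) :
    (glue n x).f 0 = 2 * x.1.1.1 + 1 := by
  rw [glue, append_f_of_lt _ _ _ (by omega), wrap_f_zero]

theorem glue_injective : Function.Injective (glue n) := by
  rintro ⟨⟨⟨i, j⟩, hij⟩, A, B⟩ ⟨⟨⟨i', j'⟩, hij'⟩, A', B'⟩ he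
  have h0 := congrArg (fun m => m.f 0) he
  simp only [glue_f_zero] at h0
  have := HasAntidiagonal.mem_antidiagonal.1 hij
  have := HasAntidiagonal.mem_antidiagonal.1 hij'
  obtain rfl : i = i' := by omega
  obtain rfl : j = j' := by omega
  obtain ⟨hA, hB⟩ := append_injective _ _ _ he
  dsimp only at hA hB
  rw [wrap_injective hA, hB]

section firstArc

variable (m : NCMatching (n + 1))

theorem odd_f_zero : Odd (m.f 0) := by
  have hpos : 0 < m.f 0 := Nat.pos_of_ne_zero (m.f_ne 0 (by omega))
  have hlt := m.f_lt 0 (by omega)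
  have hE : Even #(Finset.Ioo 0 (m.f 0)) := by
    refine Finset.even_card_of_involution_ne (f := m.f) (fun x hx => ?_) (fun x _ => m.f_f x)
      (fun x hx => m.f_ne x ?_) <;> rw [Finset.mem_Ioo] at *
    · exact m.f_mem_Ioo hx.1 hx.2
    · omega
  rw [Nat.card_Ioo] at hE
  obtain ⟨r, hr⟩ := hE
  exact ⟨r, by omega⟩

theorem f_zero_div_two_le : m.f 0 / 2 ≤ n := by
  have := m.f_lt 0 (by omega)
  omega

def underFirstArc : NCMatching (m.f 0 / 2) :=
  m.restrict 1 (m.f 0 / 2) (by have := m.f_zero_div_two_le; omega) fun x hx hx' => by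
    have := Nat.two_mul_div_two_add_one_of_odd m.odd_f_zero
    obtain ⟨h1, h2⟩ := m.f_mem_Ioo (a := 0) (x := x) (by omega) (by omega)
    omega

def afterFirstArc : NCMatching (n - m.f 0 / 2) :=
  m.restrict (2 * (m.f 0 / 2 + 1)) (n - m.f 0 / 2) (by have := m.f_zero_div_two_le; omega)
    fun x hx hx' => by
      have := Nat.two_mul_div_two_add_one_of_odd m.odd_f_zero
      have := m.f_zero_lt_f (x := x) (by omega)
      have := m.f_lt x (by have := m.f_zero_div_two_le; omega)
      omega

theorem glue_underFirstArc_afterFirstArc :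
    glue n ⟨⟨(m.f 0 / 2, n - m.f 0 / 2),
      HasAntidiagonal.mem_antidiagonal.2 (by have := m.f_zero_div_two_le; omega)⟩,
      m.underFirstArc, m.afterFirstArc⟩ = m := by
  have hi := Nat.two_mul_div_two_add_one_of_odd m.odd_f_zero
  have hin := m.f_zero_div_two_le
  ext x
  change (append _ m.underFirstArc.wrap m.afterFirstArc).f x = m.f x
  rcases lt_or_ge x (2 * (m.f 0 / 2 + 1)) with hx | hx
  · rw [append_f_of_lt _ _ _ hx]
    rcases x with _ | y
    · rw [wrap_f_zero, hi]
    · by_cases hy : y = 2 * (m.f 0 / 2)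
      · rw [hy, wrap_f_two_mul_add_one, hi, m.f_f]
      · rw [wrap_f_add_one _ (by omega), underFirstArc, restrict_f _ (by omega)]
        have := (m.f_mem_Ioo (a := 0) (x := y + 1) (by omega) (by omega)).1
        omega
  · obtain ⟨y, rfl⟩ : ∃ y, x = y + 2 * (m.f 0 / 2 + 1) := ⟨x - 2 * (m.f 0 / 2 + 1), by omega⟩
    rw [append_f_add]
    by_cases hy : y < 2 * (n - m.f 0 / 2)
    · rw [afterFirstArc, restrict_f _ hy]
      have := m.f_zero_lt_f (x := y + 2 * (m.f 0 / 2 + 1)) (by omega)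
      omega
    · rw [m.afterFirstArc.f_of_le y (by omega), m.f_of_le (y + 2 * (m.f 0 / 2 + 1)) (by omega)]

end firstArc

noncomputable def glueEquiv (n : ℕ) :
    (Σ p : antidiagonal n, NCMatching p.1.1 × NCMatching p.1.2) ≃ NCMatching (n + 1) :=
  Equiv.ofBijective (glue n) ⟨glue_injective, fun m => ⟨_, glue_underFirstArc_afterFirstArc m⟩⟩

theorem exposedCount_glueEquiv (x : Σ p : antidiagonal n, NCMatching p.1.1 × NCMatching p.1.2) :
    (glueEquiv n x).exposedCount = x.2.2.exposedCount + 1 := by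
  change (glue n x).exposedCount = _
  rw [glue, exposedCount_append, exposedCount_wrap, add_comm]

theorem card_eq_catalan (n : ℕ) : Nat.card (NCMatching n) = catalan n := by
  induction n using Nat.strong_induction_on with
  | _ n ih =>
  cases n with
  | zero => rw [Nat.card_unique, catalan_zero]
  | succ n =>
    rw [← Nat.card_congr (glueEquiv n), Nat.card_sigma, catalan_succ',
      ← sum_coe_sort (antidiagonal n)]
    refine sum_congr rfl fun p _ => ?_
    have := HasAntidiagonal.mem_antidiagonal.1 p.2
    rw [Nat.card_prod, ih _ (by omega), ih _ (by omega)]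

theorem exposedCount_pos (m : NCMatching (n + 1)) : 0 < m.exposedCount := by
  obtain ⟨x, rfl⟩ := (glueEquiv n).surjective m
  rw [exposedCount_glueEquiv]
  exact Nat.succ_pos _

theorem exposedCount_le (m : NCMatching n) : m.exposedCount ≤ n := by
  induction n using Nat.strong_induction_on with
  | _ n ih =>
  cases n with
  | zero => rw [exposedCount_eq_zero]
  | succ n =>
    obtain ⟨x, rfl⟩ := (glueEquiv n).surjective m
    have := HasAntidiagonal.mem_antidiagonal.1 x.1.2
    have := ih _ (by omega) x.2.2
    rw [exposedCount_glueEquiv]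
    omega

noncomputable def numExposed (n k : ℕ) : ℕ := Nat.card {m : NCMatching n // m.exposedCount = k}

theorem numExposed_eq_zero_of_lt {k : ℕ} (h : n < k) : numExposed n k = 0 :=
  @Nat.card_of_isEmpty _ ⟨fun m => by have := m.1.exposedCount_le; omega⟩

theorem numExposed_succ_succ (n k : ℕ) :
    numExposed (n + 1) (k + 1) = ∑ p ∈ antidiagonal n, catalan p.1 * numExposed p.2 k := by
  have e : {m : NCMatching (n + 1) // m.exposedCount = k + 1} ≃
      Σ p : antidiagonal n, NCMatching p.1.1 × {B : NCMatching p.1.2 // B.exposedCount = k} :=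
    ((glueEquiv n).subtypeEquiv (p := fun x => x.2.2.exposedCount = k) fun x => by
      rw [exposedCount_glueEquiv, Nat.add_right_cancel_iff]).symm.trans
    { toFun x := ⟨x.1.1, x.1.2.1, x.1.2.2, x.2⟩
      invFun y := ⟨⟨y.1, y.2.1, y.2.2.1⟩, y.2.2.2⟩
      left_inv _ := rfl
      right_inv _ := rfl }
  rw [numExposed, Nat.card_congr e, Nat.card_sigma]
  simp only [Nat.card_prod, card_eq_catalan]
  exact sum_coe_sort _ fun p : ℕ × ℕ => catalan p.1 * numExposed p.2 k

theorem numExposed_add (m k : ℕ) :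
    numExposed (m + k) k = ∑ t ∈ Nat.antidiagonalTuple k m, ∏ j, catalan (t j) := by
  induction k generalizing m with
  | zero =>
    cases m with
    | zero =>
      rw [numExposed, Nat.card_congr (Equiv.subtypeUnivEquiv exposedCount_eq_zero),
        Nat.card_unique]
      simp
    | succ m =>
      rw [numExposed, @Nat.card_of_isEmpty _ ⟨fun x => x.1.exposedCount_pos.ne' x.2⟩]
      simp
  | succ k ih =>
    rw [Nat.sum_antidiagonalTuple_succ]
    simp_rw [Fin.prod_univ_succ, Fin.cons_zero, Fin.cons_succ, ← mul_sum, ← ih]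
    change numExposed (m + k + 1) (k + 1) = _
    rw [numExposed_succ_succ, Nat.sum_antidiagonal_eq_sum_range_succ_mk,
      Nat.sum_antidiagonal_eq_sum_range_succ_mk, Nat.succ_eq_add_one, Nat.succ_eq_add_one,
      show m + k + 1 = m + 1 + k by omega, sum_range_add,
      sum_eq_zero (s := range k) fun i hi => by
        rw [numExposed_eq_zero_of_lt (by rw [mem_range] at hi; omega), mul_zero], add_zero]
    refine sum_congr rfl fun i hi => ?_
    rw [mem_range] at hi
    rw [show m + k - i = m - i + k by omega]

end NCMatching
namespace TLDiagram

variable {n : ℕ}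

def toNCMatching (D : TLDiagram n) : NCMatching n where
  f x := if h : x < 2 * n then D.f ⟨x, h⟩ else x
  f_lt x hx := by simp [hx]
  f_of_le x hx := dif_neg (not_lt.2 hx)
  f_f x := by
    by_cases hx : x < 2 * n
    · simp [hx, D.involutive]
    · simp [hx]
  f_ne x hx := by simpa [hx, Fin.ext_iff] using D.noFixedPoint ⟨x, hx⟩
  noncrossing a b hab hb hf := by
    by_cases ha : a < 2 * n
    · have hb' : b < 2 * n := by simp only [ha, dite_true] at hb; omega
      simp only [ha, hb', dite_true] at hb hf
      exact D.noncrossing ⟨a, ha⟩ ⟨b, hb'⟩ hab hb hf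
    · simp only [ha, dite_false] at hb
      omega

theorem toNCMatching_f (D : TLDiagram n) (a : Fin (2 * n)) : D.toNCMatching.f a = D.f a :=
  dif_pos a.2

def ofNCMatching (m : NCMatching n) : TLDiagram n where
  f x := ⟨m.f x, m.f_lt x x.2⟩
  involutive x := Fin.ext (m.f_f x)
  noFixedPoint x h := m.f_ne x x.2 (congrArg Fin.val h)
  noncrossing a b := m.noncrossing a b

def equivNCMatching : TLDiagram n ≃ NCMatching n where
  toFun := toNCMatching
  invFun := ofNCMatching
  left_inv D := by
    cases D
    simp only [ofNCMatching, toNCMatching_f, Fin.eta]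
  right_inv m := by
    ext x
    by_cases hx : x < 2 * n
    · exact dif_pos hx
    · exact (dif_neg hx).trans (m.f_of_le x (not_lt.1 hx)).symm

theorem isExposed_toNCMatching (D : TLDiagram n) (a : Fin (2 * n)) :
    D.toNCMatching.IsExposed a ↔ D.IsExposed a := by
  simp only [NCMatching.IsExposed, TLDiagram.IsExposed, toNCMatching_f, Fin.lt_def]
  refine and_congr_right fun _ => ⟨fun h c => by simpa [← toNCMatching_f] using h c,
    fun h c hc => ?_⟩
  have hc' : c < 2 * n := hc.1.trans a.2
  exact h ⟨c, hc'⟩ (by simpa [← toNCMatching_f] using hc)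

theorem exposedCount_toNCMatching (D : TLDiagram n) :
    D.toNCMatching.exposedCount = exposedCount D := by
  have : {x | D.toNCMatching.IsExposed x} = Fin.val '' {a | D.IsExposed a} := by
    ext x
    refine ⟨fun hx => ⟨⟨x, hx.lt_two_mul⟩, (D.isExposed_toNCMatching ⟨x, _⟩).1 hx, rfl⟩, ?_⟩
    rintro ⟨a, ha, rfl⟩
    exact (D.isExposed_toNCMatching a).2 ha
  rw [NCMatching.exposedCount, this, Set.ncard_image_of_injective _ Fin.val_injective,
    exposedCount, ← Nat.card_coe_set_eq]
  rfl

end TLDiagram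

theorem stmt11_general (n k : ℕ) (h2 : k ≤ n) :
    Nat.card {D : TLDiagram n // exposedCount D = k} =
      ∑ t ∈ Finset.Nat.antidiagonalTuple k (n - k), ∏ j, catalan (t j) := by
  obtain ⟨m, rfl⟩ := Nat.exists_eq_add_of_le' h2
  rw [Nat.add_sub_cancel, ← NCMatching.numExposed_add]
  exact Nat.card_congr (TLDiagram.equivNCMatching.subtypeEquiv fun D => by
    rw [← D.exposedCount_toNCMatching]; rfl)

/-- for `k ∈ [1, n]`, the number of Temperley–Lieb diagrams on
`n` points with exactly `k` arcs exposed to the left side equals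
`Σ_{i₁+⋯+i_k = n-k} C_{i₁} ⋯ C_{i_k}`. -/
theorem stmt11 (n k : ℕ) (h1 : 1 ≤ k) (h2 : k ≤ n) :
    Nat.card {D : TLDiagram n // exposedCount D = k} =
      ∑ t ∈ Finset.Nat.antidiagonalTuple k (n - k), ∏ j, catalan (t j) :=
  stmt11_general n k h2
end
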